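/- For α < 1, the following set identity holds: 𝒳^α equals the closure in ℋ^α of the set {(θ, θ∘Kθ − c) : θ ∈ ℋ, c ∈ ℝ}, where ℋ is the space of zero-mean L²(𝕋²) functions. In particular, for every θ ∈ ℋ the resonant product θ∘Kθ is a well-defined element of 𝒞^{2α−2}(𝕋²) with ‖θ∘Kθ‖_{2α−2} ≲ ‖θ‖²_{L²(𝕋²)}, and if θ^ε → θ in L²(𝕋²) then (θ^ε, θ^ε∘Kθ^ε) → (θ, θ∘Kθ) in ℋ^α. -/

import Mathlib

noncomputable section

open MeasureTheory ProbabilityTheory Filter Topology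

namespace GPAM

/-- Frequencies: the dual lattice `ℤ²` of the two-dimensional torus `𝕋²`. -/
abbrev Freq : Type := ℤ × ℤ

/-- A periodic distribution on `𝕋²`, represented by its Fourier coefficients. -/
abbrev Dist : Type := Freq → ℂ

def toR (k : Freq) : ℝ × ℝ := ((k.1 : ℝ), (k.2 : ℝ))

/-- Euclidean norm on `ℝ²`. -/
def enorm2 (x : ℝ × ℝ) : ℝ := Real.sqrt (x.1 ^ 2 + x.2 ^ 2)

/-- `|k|` for a frequency `k ∈ ℤ²`. -/
def freqNorm (k : Freq) : ℝ := enorm2 (toR k)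

/-- Evaluation of a Fourier series at a point `x` of (a fundamental domain of) `𝕋²`. -/
def eval (a : Dist) (x : ℝ × ℝ) : ℂ :=
  ∑' k : Freq, a k * Complex.exp (Complex.I * (((k.1 : ℝ) * x.1 + (k.2 : ℝ) * x.2 : ℝ) : ℂ))

/-- The `L^∞` norm of (the function represented by) `a`. -/
def supNorm (a : Dist) : ℝ := ⨆ x : ℝ × ℝ, ‖eval a x‖

/-- A Littlewood–Paley pair `(χ, ρ)` on `ℝ²`. -/
structure LP where
  chi : ℝ × ℝ → ℝ
  rho : ℝ × ℝ → ℝ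
  chi_smooth : ContDiff ℝ (⊤ : ℕ∞) chi
  rho_smooth : ContDiff ℝ (⊤ : ℕ∞) rho
  chi_nonneg : ∀ x, 0 ≤ chi x
  rho_nonneg : ∀ x, 0 ≤ rho x
  chi_radial : ∀ x y, enorm2 x = enorm2 y → chi x = chi y
  rho_radial : ∀ x y, enorm2 x = enorm2 y → rho x = rho y
  chi_ball : ∃ R : ℝ, 0 < R ∧ ∀ x, R ≤ enorm2 x → chi x = 0
  rho_annulus : ∃ r R : ℝ, 0 < r ∧ r < R ∧ ∀ x, enorm2 x < r ∨ R < enorm2 x → rho x = 0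
  partition : ∀ x, chi x + ∑' j : ℕ, rho ((2 : ℝ) ^ (-(j : ℤ)) • x) = 1
  disj_chi_rho : ∀ j : ℕ, 1 ≤ j → ∀ x, chi x * rho ((2 : ℝ) ^ (-(j : ℤ)) • x) = 0
  disj_rho_rho : ∀ i j : ℕ, 1 < |(i : ℤ) - (j : ℤ)| →
    ∀ x, rho ((2 : ℝ) ^ (-(i : ℤ)) • x) * rho ((2 : ℝ) ^ (-(j : ℤ)) • x) = 0

/-- The Littlewood–Paley block `Δ_j`, `j ≥ -1`, acting on Fourier coefficients. -/
def LP.block (L : LP) (j : ℤ) (a : Dist) : Dist := fun k =>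
  if j = -1 then (L.chi (toR k) : ℂ) * a k
  else ((L.rho ((2 : ℝ) ^ (-j) • toR k) : ℝ) : ℂ) * a k

/-- The Besov–Hölder norm `‖a‖_β = sup_{j ≥ -1} 2^{jβ} ‖Δ_j a‖_{L^∞}` of `𝒞^β = B^β_{∞,∞}`. -/
def LP.besov (L : LP) (β : ℝ) (a : Dist) : ℝ :=
  ⨆ j : ℕ, (2 : ℝ) ^ (β * ((j : ℝ) - 1)) * supNorm (L.block ((j : ℤ) - 1) a)

/-- Membership in `𝒞^β(𝕋²)`: the quantities defining the Besov norm are bounded. -/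
def LP.memBesov (L : LP) (β : ℝ) (a : Dist) : Prop :=
  BddAbove (Set.range fun j : ℕ =>
    (2 : ℝ) ^ (β * ((j : ℝ) - 1)) * supNorm (L.block ((j : ℤ) - 1) a))

/-- Product of two periodic distributions (convolution of Fourier coefficients). -/
def mulD (a b : Dist) : Dist := fun k => ∑' p : Freq, a p * b (k - p)

/-- The resonant product `f ∘ g = Σ_{|i-j| ≤ 1} Δ_i f Δ_j g`. -/
def LP.reson (L : LP) (f g : Dist) : Dist := fun k =>
  ∑' ij : ℤ × ℤ,
    if -1 ≤ ij.1 ∧ -1 ≤ ij.2 ∧ |ij.1 - ij.2| ≤ 1 then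
      mulD (L.block ij.1 f) (L.block ij.2 g) k
    else 0

/-- The paraproduct `f ≺ g = Σ_j Σ_{i < j-1} Δ_i f Δ_j g`. -/
def LP.para (L : LP) (f g : Dist) : Dist := fun k =>
  ∑' ij : ℤ × ℤ,
    if -1 ≤ ij.1 ∧ -1 ≤ ij.2 ∧ ij.1 < ij.2 - 1 then
      mulD (L.block ij.1 f) (L.block ij.2 g) k
    else 0

/-- `K = (-Δ)⁻¹`, acting on zero-mean distributions via `ℱ(Kθ)(k) = |k|⁻² ℱθ(k)`. -/
def Kop (a : Dist) : Dist := fun k => if k = 0 then 0 else a k / ((freqNorm k ^ 2 : ℝ) : ℂ)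

/-- The constant function `c` on the torus, as a distribution. -/
def constD (c : ℝ) : Dist := fun k => if k = 0 then (c : ℂ) else 0

/-- The canonical enhancement `(θ, θ ∘ Kθ - c)` of a (nice) distribution `θ`. -/
def lift (L : LP) (θ : Dist) (c : ℝ) : Dist × Dist := (θ, L.reson θ (Kop θ) - constD c)

/-- Distance in `ℋ^α = 𝒞^{α-2} × 𝒞^{2α-2}` (sum norm). -/
def hDist (L : LP) (α : ℝ) (Ξ Ξ' : Dist × Dist) : ℝ :=
  L.besov (α - 2) (Ξ.1 - Ξ'.1) + L.besov (2 * α - 2) (Ξ.2 - Ξ'.2)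

/-- Closure of a set of pairs with respect to the `ℋ^α` distance. -/
def clos (L : LP) (α : ℝ) (S : Set (Dist × Dist)) : Set (Dist × Dist) :=
  {Ξ | ∀ δ : ℝ, 0 < δ → ∃ Ξ' ∈ S, hDist L α Ξ Ξ' < δ}

/-- `θ` is a real zero-mean `L²` function (an element of the Cameron–Martin space `ℋ`). -/
def IsZeroMeanL2 (a : Dist) : Prop :=
  a 0 = 0 ∧ Summable (fun k : Freq => ‖a k‖ ^ 2) ∧ ∀ k, star (a k) = a (-k)

/-- The `L²(𝕋²)`-norm. -/
def l2norm (a : Dist) : ℝ := Real.sqrt (∑' k : Freq, ‖a k‖ ^ 2)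

/-- `a` is a real smooth function on `𝕋²` (rapidly decaying coefficients). -/
def IsSmoothD (a : Dist) : Prop :=
  (∀ k, star (a k) = a (-k)) ∧
    ∀ n : ℕ, ∃ C : ℝ, ∀ k : Freq, ‖a k‖ * (1 + freqNorm k) ^ n ≤ C

/-- `a` is a real smooth function with zero mean on `𝕋²`. -/
def IsSmoothZeroMean (a : Dist) : Prop := a 0 = 0 ∧ IsSmoothD a

/-- The space `𝒳^α`: closure in `ℋ^α` of the canonical enhancements of smooth
zero-mean functions. -/
def Xspace (L : LP) (α : ℝ) : Set (Dist × Dist) :=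
  clos L α {Ξ | ∃ θ : Dist, ∃ c : ℝ, IsSmoothZeroMean θ ∧ Ξ = lift L θ c}

/-- Membership in `𝒞^{0,β}(𝕋²)`, the closure of smooth functions in `𝒞^β(𝕋²)`. -/
def MemC0 (L : LP) (β : ℝ) (a : Dist) : Prop :=
  ∀ δ : ℝ, 0 < δ → ∃ b : Dist, IsSmoothD b ∧ L.besov β (a - b) < δ

/-- Membership in `Č^{0,β}(𝕋²)`, the closure of smooth zero-mean functions in `𝒞^β(𝕋²)`. -/
def MemC0check (L : LP) (β : ℝ) (a : Dist) : Prop :=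
  ∀ δ : ℝ, 0 < δ → ∃ b : Dist, IsSmoothZeroMean b ∧ L.besov β (a - b) < δ

/-- The translation operator `T_h Ξ = (Ξ¹ + h, Ξ² + h∘Kh + h∘KΞ¹ + Ξ¹∘Kh)`. -/
def Th (L : LP) (h : Dist) (Ξ : Dist × Dist) : Dist × Dist :=
  (Ξ.1 + h, Ξ.2 + L.reson h (Kop h) + L.reson h (Kop Ξ.1) + L.reson Ξ.1 (Kop h))

/-- An admissible mollifier `ψ`. -/
structure IsMollifier (ψ : ℝ × ℝ → ℝ) : Prop where
  radial : ∀ x y, enorm2 x = enorm2 y → ψ x = ψ y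
  bounded : ∃ C : ℝ, ∀ x, |ψ x| ≤ C
  compactSupp : ∃ R : ℝ, 0 < R ∧ ∀ x, R ≤ enorm2 x → ψ x = 0
  contAtZero : ContinuousAt ψ 0
  oneAtZero : ψ 0 = 1

/-- Mollification: `ξ^ε = Σ_{k ≠ 0} ψ(εk) ξ̂(k) e_k`. -/
def mollify (ψ : ℝ × ℝ → ℝ) (ε : ℝ) (a : Dist) : Dist := fun k =>
  if k = 0 then 0 else ((ψ (ε • toR k) : ℝ) : ℂ) * a k

/-- The renormalisation constant `c_ε = Σ_{k ≠ 0} |ψ(εk)|² / |k|²`. -/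
def cEps (ψ : ℝ × ℝ → ℝ) (ε : ℝ) : ℝ :=
  ∑' k : Freq, if k = 0 then 0 else ψ (ε • toR k) ^ 2 / freqNorm k ^ 2

/-- The constant `b_ε = Σ_{k ≠ 0} ψ(εk) / |k|²`. -/
def bEps (ψ : ℝ × ℝ → ℝ) (ε : ℝ) : ℝ :=
  ∑' k : Freq, if k = 0 then 0 else ψ (ε • toR k) / freqNorm k ^ 2

/-- Choice of "positive" frequencies: one from each pair `{k, -k}`, `k ≠ 0`. -/
def posFreq (k : Freq) : Prop := 0 < k.1 ∨ (k.1 = 0 ∧ 0 < k.2)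

/-- `ξ` is a zero-mean spatial white noise on `𝕋²` under the probability measure `P`:
its Fourier coefficients `ξ̂(k)`, `k ≠ 0`, form a family of standard complex Gaussians
(independent real and imaginary parts of variance 1/2, independent over a choice of
half-lattice), `ξ̂(0) = 0` and `ξ̂(-k) = conj ξ̂(k)`. -/
structure IsWhiteNoise {Ω : Type} [MeasurableSpace Ω] (P : Measure Ω) (ξ : Ω → Dist) :
    Prop where
  meas : ∀ k : Freq, Measurable fun ω => ξ ω k
  zeroMean : ∀ᵐ ω ∂P, ξ ω 0 = 0
  isReal : ∀ᵐ ω ∂P, ∀ k, star (ξ ω k) = ξ ω (-k)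
  gaussRe : ∀ k : Freq, posFreq k → P.map (fun ω => (ξ ω k).re) = gaussianReal 0 (1 / 2)
  gaussIm : ∀ k : Freq, posFreq k → P.map (fun ω => (ξ ω k).im) = gaussianReal 0 (1 / 2)
  indep : iIndepFun
    (fun (p : {k : Freq // posFreq k} × Bool) (ω : Ω) =>
      if p.2 then (ξ ω p.1.1).re else (ξ ω p.1.1).im) P

/-- `Ξ` lies in the support of the law of `X : Ω → ℋ^α`. -/
def inSupp {Ω : Type} [MeasurableSpace Ω] (P : Measure Ω) (L : LP) (α : ℝ)
    (X : Ω → Dist × Dist) (Ξ : Dist × Dist) : Prop :=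
  ∀ δ : ℝ, 0 < δ → 0 < P {ω | hDist L α (X ω) Ξ < δ}

/-- `x` lies in the support of the law of `X : Ω → 𝒞^β`. -/
def inSupp1 {Ω : Type} [MeasurableSpace Ω] (P : Measure Ω) (L : LP) (β : ℝ)
    (X : Ω → Dist) (x : Dist) : Prop :=
  ∀ δ : ℝ, 0 < δ → 0 < P {ω | L.besov β (X ω - x) < δ}

/-- The heat semigroup `P_t = e^{tΔ}` on Fourier coefficients. -/
def heat (t : ℝ) (a : Dist) : Dist := fun k =>
  ((Real.exp (-t * freqNorm k ^ 2) : ℝ) : ℂ) * a k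

/-- Fourier coefficients of a function on `𝕋² = (ℝ/2πℤ)²`. -/
def fourierCoeff2 (u : ℝ × ℝ → ℂ) (k : Freq) : ℂ :=
  ((1 / (2 * Real.pi) ^ 2 : ℝ) : ℂ) *
    ∫ x in Set.Icc (0 : ℝ) (2 * Real.pi) ×ˢ Set.Icc (0 : ℝ) (2 * Real.pi),
      u x * Complex.exp (-Complex.I * (((k.1 : ℝ) * x.1 + (k.2 : ℝ) * x.2 : ℝ) : ℂ))

/-- Composition of a real nonlinearity `f` with (the function represented by) `a`,
as a distribution: the Fourier coefficients of `x ↦ f(a(x))`. -/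
def compF (f : ℝ → ℝ) (a : Dist) : Dist := fun k =>
  fourierCoeff2 (fun x => ((f ((eval a x).re) : ℝ) : ℂ)) k

/-- Mild solution of `∂ₜ v - Δ v = f(v) h - c f'(v) f(v)`, `v(0) = u₀`, i.e.
`v_t = P_t u₀ + ∫₀ᵗ P_{t-s}(f(v_s) h) ds - c ∫₀ᵗ P_{t-s}(f'(v_s) f(v_s)) ds`. -/
def IsMildSol (f : ℝ → ℝ) (h : Dist) (c : ℝ) (u0 : Dist) (v : ℝ → Dist) : Prop :=
  ∀ t : ℝ, 0 ≤ t → ∀ k : Freq,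
    v t k =
      heat t u0 k
        + (∫ s in (0 : ℝ)..t, heat (t - s) (mulD (compF f (v s)) h) k)
        - (c : ℂ) * ∫ s in (0 : ℝ)..t,
            heat (t - s) (compF (fun y => deriv f y * f y) (v s)) k

/-- The distance of `C([0,T], 𝒞^β(𝕋²))`. -/
def cBesovDist (L : LP) (β T : ℝ) (v w : ℝ → Dist) : ℝ :=
  ⨆ t : Set.Icc (0 : ℝ) T, L.besov β (v t - w t)

/-- Closure of a set of time-dependent distributions in `C([0,T], 𝒞^β(𝕋²))`. -/
def closC (L : LP) (β T : ℝ) (S : Set (ℝ → Dist)) : Set (ℝ → Dist) :=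
  {v | ∀ δ : ℝ, 0 < δ → ∃ w ∈ S, cBesovDist L β T v w < δ}

/-- The distance of `C([0,T], L²(𝕋²))`. -/
def cL2dist (T : ℝ) (v w : ℝ → Dist) : ℝ :=
  ⨆ t : Set.Icc (0 : ℝ) T, l2norm (v t - w t)

/-- `a` is a real `L²(𝕋²)` function. -/
def IsL2 (a : Dist) : Prop :=
  Summable (fun k : Freq => ‖a k‖ ^ 2) ∧ ∀ k, star (a k) = a (-k)

/-- Continuity in time with values in `L²(𝕋²)`, on `[0,T]`. -/
def ContL2 (T : ℝ) (v : ℝ → Dist) : Prop :=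
  ∀ t ∈ Set.Icc (0 : ℝ) T, ∀ ε : ℝ, 0 < ε → ∃ δ : ℝ, 0 < δ ∧
    ∀ s ∈ Set.Icc (0 : ℝ) T, |s - t| < δ → l2norm (v s - v t) < ε

/-- `f ∈ C³_b(ℝ)`: three times continuously differentiable with bounded derivatives. -/
def C3b (f : ℝ → ℝ) : Prop :=
  ContDiff ℝ 3 f ∧ ∀ i : ℕ, i ≤ 3 → ∃ C : ℝ, ∀ x : ℝ, |iteratedDeriv i f x| ≤ C

/-- The inhomogeneous Sobolev "square norm" `Σ_k (1+|k|²)^γ |û(k)|²` of `H^γ(𝕋²)`. -/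
def sobSum (γ : ℝ) (a : Dist) : ℝ := ∑' k : Freq, (1 + freqNorm k ^ 2) ^ γ * ‖a k‖ ^ 2

/-- The highly oscillatory functions `X^{n,c}(x) = √c 2^{n+1} cos(2ⁿ ⟨(1,1), x⟩)`. -/
def Xosc (n : ℕ) (c : ℝ) : Dist := fun k =>
  if k = ((2 ^ n : ℤ), (2 ^ n : ℤ)) ∨ k = (-(2 ^ n : ℤ), -(2 ^ n : ℤ)) then
    ((Real.sqrt c * 2 ^ n : ℝ) : ℂ)
  else 0

/-- Truncation of a distribution to frequencies `0 < |k| ≤ ν 2ⁿ`. -/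
def truncD (ν : ℝ) (n : ℕ) (a : Dist) : Dist := fun k =>
  if k ≠ 0 ∧ freqNorm k ≤ ν * 2 ^ n then a k else 0

/-- The constant `c_n = Σ_{0 < |k| ≤ ν 2ⁿ} |k|⁻²`. -/
def cTrunc (ν : ℝ) (n : ℕ) : ℝ :=
  ∑' k : Freq, if k ≠ 0 ∧ freqNorm k ≤ ν * 2 ^ n then 1 / freqNorm k ^ 2 else 0

end GPAM


namespace GPAM

/-! ### Auxiliary geometric lemmas -/

theorem enorm2_nonneg (x : ℝ × ℝ) : 0 ≤ enorm2 x := Real.sqrt_nonneg _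

theorem abs_fst_le_enorm2 (x : ℝ × ℝ) : |x.1| ≤ enorm2 x := by
  rw [enorm2, ← Real.sqrt_sq_eq_abs]
  exact Real.sqrt_le_sqrt (by nlinarith [sq_nonneg x.2])

theorem abs_snd_le_enorm2 (x : ℝ × ℝ) : |x.2| ≤ enorm2 x := by
  rw [enorm2, ← Real.sqrt_sq_eq_abs]
  exact Real.sqrt_le_sqrt (by nlinarith [sq_nonneg x.1])

theorem enorm2_add_le (x y : ℝ × ℝ) : enorm2 (x + y) ≤ enorm2 x + enorm2 y := by
  have h3 : (x.1*y.1+x.2*y.2)^2 ≤ (x.1^2+x.2^2)*(y.1^2+y.2^2) := by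
    nlinarith [sq_nonneg (x.1*y.2 - x.2*y.1)]
  have cs : x.1*y.1 + x.2*y.2 ≤ Real.sqrt (x.1^2+x.2^2) * Real.sqrt (y.1^2+y.2^2) := by
    calc x.1*y.1 + x.2*y.2 ≤ |x.1*y.1 + x.2*y.2| := le_abs_self _
      _ = Real.sqrt ((x.1*y.1+x.2*y.2)^2) := (Real.sqrt_sq_eq_abs _).symm
      _ ≤ Real.sqrt ((x.1^2+x.2^2)*(y.1^2+y.2^2)) := Real.sqrt_le_sqrt h3
      _ = _ := Real.sqrt_mul (by positivity) _
  have hs1 := Real.sq_sqrt (show (0:ℝ) ≤ x.1^2+x.2^2 by positivity)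
  have hs2 := Real.sq_sqrt (show (0:ℝ) ≤ y.1^2+y.2^2 by positivity)
  have key : (x.1+y.1)^2 + (x.2+y.2)^2
      ≤ (Real.sqrt (x.1^2+x.2^2) + Real.sqrt (y.1^2+y.2^2))^2 := by nlinarith
  calc enorm2 (x + y) = Real.sqrt ((x.1+y.1)^2 + (x.2+y.2)^2) := rfl
    _ ≤ Real.sqrt ((Real.sqrt (x.1^2+x.2^2) + Real.sqrt (y.1^2+y.2^2))^2) :=
        Real.sqrt_le_sqrt key
    _ = _ := Real.sqrt_sq (by positivity)

theorem enorm2_smul (c : ℝ) (hc : 0 ≤ c) (x : ℝ × ℝ) : enorm2 (c • x) = c * enorm2 x := by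
  have : (c • x).1 = c * x.1 ∧ (c • x).2 = c * x.2 := ⟨rfl, rfl⟩
  rw [enorm2, enorm2, this.1, this.2]
  rw [show (c*x.1)^2 + (c*x.2)^2 = c^2 * (x.1^2 + x.2^2) by ring, Real.sqrt_mul (sq_nonneg c),
    Real.sqrt_sq hc]

theorem freqNorm_nonneg (k : Freq) : 0 ≤ freqNorm k := Real.sqrt_nonneg _

theorem freqNorm_zero : freqNorm 0 = 0 := by
  simp [freqNorm, toR, enorm2]

theorem toR_add (p q : Freq) : toR (p + q) = toR p + toR q := by
  simp [toR, Prod.ext_iff]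

theorem freqNorm_triangle (p q : Freq) : freqNorm (p + q) ≤ freqNorm p + freqNorm q := by
  rw [freqNorm, toR_add]; exact enorm2_add_le _ _

theorem one_le_freqNorm {k : Freq} (hk : k ≠ 0) : 1 ≤ freqNorm k := by
  have h : (1:ℝ) ≤ (k.1:ℝ)^2 + (k.2:ℝ)^2 := by
    have hor : k.1 ≠ 0 ∨ k.2 ≠ 0 := by
      by_contra h; push_neg at h; exact hk (Prod.ext h.1 h.2)
    rcases hor with h1 | h2
    · have h1a : (1:ℤ) ≤ |k.1| := Int.one_le_abs h1
      have : (1:ℤ) ≤ k.1^2 := by nlinarith [sq_abs k.1]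
      have h1' : (1:ℝ) ≤ (k.1:ℝ)^2 := by exact_mod_cast this
      nlinarith [sq_nonneg (k.2:ℝ)]
    · have h2a : (1:ℤ) ≤ |k.2| := Int.one_le_abs h2
      have : (1:ℤ) ≤ k.2^2 := by nlinarith [sq_abs k.2]
      have h2' : (1:ℝ) ≤ (k.2:ℝ)^2 := by exact_mod_cast this
      nlinarith [sq_nonneg (k.1:ℝ)]
  calc (1:ℝ) = Real.sqrt 1 := (Real.sqrt_one).symm
    _ ≤ _ := Real.sqrt_le_sqrt h

theorem abs_fst_le_freqNorm (k : Freq) : |(k.1:ℝ)| ≤ freqNorm k := abs_fst_le_enorm2 (toR k)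
theorem abs_snd_le_freqNorm (k : Freq) : |(k.2:ℝ)| ≤ freqNorm k := abs_snd_le_enorm2 (toR k)

end GPAM
namespace GPAM

/-! ### Frequency grids -/

def gridF (N : ℕ) : Finset Freq := (Finset.Icc (-(N:ℤ)) N) ×ˢ (Finset.Icc (-(N:ℤ)) N)

def FsF (R : ℝ) : Finset Freq := gridF ⌈R⌉₊

theorem mem_FsF {k : Freq} {R : ℝ} (h : freqNorm k ≤ R) : k ∈ FsF R := by
  have h1 : |(k.1:ℝ)| ≤ (⌈R⌉₊:ℝ) := le_trans (le_trans (abs_fst_le_freqNorm k) h) (Nat.le_ceil R)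
  have h2 : |(k.2:ℝ)| ≤ (⌈R⌉₊:ℝ) := le_trans (le_trans (abs_snd_le_freqNorm k) h) (Nat.le_ceil R)
  have h1' : |k.1| ≤ (⌈R⌉₊:ℤ) := by exact_mod_cast (by push_cast at h1 ⊢; exact h1 : ((|k.1|:ℤ):ℝ) ≤ ((⌈R⌉₊:ℤ):ℝ))
  have h2' : |k.2| ≤ (⌈R⌉₊:ℤ) := by exact_mod_cast (by push_cast at h2 ⊢; exact h2 : ((|k.2|:ℤ):ℝ) ≤ ((⌈R⌉₊:ℤ):ℝ))
  rw [abs_le] at h1' h2'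
  simp only [FsF, gridF, Finset.mem_product, Finset.mem_Icc]
  exact ⟨⟨h1'.1, h1'.2⟩, ⟨h2'.1, h2'.2⟩⟩

theorem not_mem_FsF {k : Freq} {R : ℝ} (h : k ∉ FsF R) : R < freqNorm k := by
  by_contra hc; push_neg at hc; exact h (mem_FsF hc)

theorem card_gridF (N : ℕ) : (gridF N).card = (2*N+1)^2 := by
  rw [gridF, Finset.card_product, Int.card_Icc]
  have : ((N:ℤ) + 1 - -(N:ℤ)).toNat = 2*N+1 := by omega
  rw [this]; ring

theorem card_FsF_le {R : ℝ} (hR : 0 ≤ R) : ((FsF R).card : ℝ) ≤ (2*R+3)^2 := by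
  rw [FsF, card_gridF]
  have : ((⌈R⌉₊:ℝ)) < R + 1 := Nat.ceil_lt_add_one hR
  have h2 : ((2*⌈R⌉₊+1 : ℕ) : ℝ) ≤ 2*R+3 := by push_cast; linarith
  push_cast
  have hnn : (0:ℝ) ≤ 2*(⌈R⌉₊:ℝ)+1 := by positivity
  nlinarith

/-! ### eval and supNorm -/

theorem norm_exp_I_mul_real (t : ℝ) : ‖Complex.exp (Complex.I * (t:ℂ))‖ = 1 := by
  rw [Complex.norm_exp]
  simp

theorem eval_eq_sum {a : Dist} {F : Finset Freq} (h : ∀ k ∉ F, a k = 0) (x : ℝ × ℝ) :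
    eval a x = ∑ k ∈ F,
      a k * Complex.exp (Complex.I * (((k.1 : ℝ) * x.1 + (k.2 : ℝ) * x.2 : ℝ) : ℂ)) :=
  tsum_eq_sum (fun k hk => by rw [h k hk, zero_mul])

theorem norm_eval_le_sum {a : Dist} {F : Finset Freq} (h : ∀ k ∉ F, a k = 0) (x : ℝ × ℝ) :
    ‖eval a x‖ ≤ ∑ k ∈ F, ‖a k‖ := by
  rw [eval_eq_sum h x]
  refine (norm_sum_le _ _).trans (Finset.sum_le_sum fun k _ => ?_)
  rw [norm_mul, norm_exp_I_mul_real, mul_one]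

theorem supNorm_le_sum {a : Dist} {F : Finset Freq} (h : ∀ k ∉ F, a k = 0) :
    supNorm a ≤ ∑ k ∈ F, ‖a k‖ :=
  ciSup_le fun x => norm_eval_le_sum h x

theorem supNorm_nonneg (a : Dist) : 0 ≤ supNorm a :=
  Real.iSup_nonneg fun _ => norm_nonneg _

/-! ### l2 norms -/

theorem l2norm_nonneg (a : Dist) : 0 ≤ l2norm a := Real.sqrt_nonneg _

theorem sq_l2norm {a : Dist} : l2norm a ^ 2 = ∑' k, ‖a k‖^2 :=
  Real.sq_sqrt (tsum_nonneg fun _ => sq_nonneg _)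

theorem sum_sq_shift {a : Dist} (h : Summable fun k => ‖a k‖^2) (F : Finset Freq) (k : Freq) :
    ∑ q ∈ F, ‖a (k - q)‖^2 ≤ ∑' p, ‖a p‖^2 := by
  have hinj : ∀ x ∈ F, ∀ y ∈ F, k - x = k - y → x = y := by
    intro x _ y _ hxy
    have : k - (k - x) = k - (k - y) := by rw [hxy]
    simpa using this
  rw [← Finset.sum_image (g := fun q => k - q) (f := fun p => ‖a p‖^2) hinj]
  exact Summable.sum_le_tsum _ (fun i _ => sq_nonneg _) h

theorem sum_norm_le_sqrt (F : Finset Freq) (v : Freq → ℂ) :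
    ∑ k ∈ F, ‖v k‖ ≤ Real.sqrt F.card * Real.sqrt (∑ k ∈ F, ‖v k‖^2) := by
  have h := Real.sum_mul_le_sqrt_mul_sqrt F (fun _ => (1:ℝ)) (fun k => ‖v k‖)
  simpa using h

/-! ### Besov helpers -/

theorem besov_nonneg (L : LP) (β : ℝ) (a : Dist) : 0 ≤ L.besov β a :=
  Real.iSup_nonneg fun _ =>
    mul_nonneg (le_of_lt (Real.rpow_pos_of_pos two_pos _)) (supNorm_nonneg _)

theorem besov_le {L : LP} {β : ℝ} {a : Dist} {C : ℝ}
    (h : ∀ j : ℕ, (2:ℝ)^(β*((j:ℝ)-1)) * supNorm (L.block ((j:ℤ)-1) a) ≤ C) :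
    L.besov β a ≤ C := ciSup_le h

theorem memBesov_of {L : LP} {β : ℝ} {a : Dist} {C : ℝ}
    (h : ∀ j : ℕ, (2:ℝ)^(β*((j:ℝ)-1)) * supNorm (L.block ((j:ℤ)-1) a) ≤ C) :
    L.memBesov β a := ⟨C, by rintro y ⟨j, rfl⟩; exact h j⟩

/-! ### block and Kop algebra -/

def LP.cut (L : LP) (j : ℤ) (k : Freq) : ℂ :=
  if j = -1 then ((L.chi (toR k) : ℝ) : ℂ) else ((L.rho ((2:ℝ)^(-j) • toR k) : ℝ) : ℂ)

theorem LP.block_eq_cut (L : LP) (j : ℤ) (a : Dist) (k : Freq) :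
    L.block j a k = L.cut j k * a k := by
  simp only [LP.block, LP.cut]; split <;> rfl

theorem LP.block_sub (L : LP) (j : ℤ) (a b : Dist) :
    L.block j (a - b) = L.block j a - L.block j b := by
  funext k
  simp only [LP.block_eq_cut, Pi.sub_apply]; ring

theorem LP.block_add (L : LP) (j : ℤ) (a b : Dist) :
    L.block j (a + b) = L.block j a + L.block j b := by
  funext k
  simp only [LP.block_eq_cut, Pi.add_apply]; ring

theorem Kop_sub (a b : Dist) : Kop (a - b) = Kop a - Kop b := by
  funext k
  simp only [Kop, Pi.sub_apply]
  split
  · simp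
  · rw [sub_div]

end GPAM
namespace GPAM

/-! ### Context of constants for an LP pair -/

structure Ctx (L : LP) where
  Rm : ℝ
  r : ℝ
  CB : ℝ
  CK : ℝ
  c0 : ℕ
  hr : 0 < r
  hRm : 0 < Rm
  hCB : 0 ≤ CB
  hCK : 1 ≤ CK
  chiB : ∀ x, |L.chi x| ≤ CB
  rhoB : ∀ x, |L.rho x| ≤ CB
  chi0 : ∀ x, Rm ≤ enorm2 x → L.chi x = 0
  rho0hi : ∀ x, Rm < enorm2 x → L.rho x = 0
  rho0lo : ∀ x, enorm2 x < r → L.rho x = 0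
  hCKr : r⁻¹ * r⁻¹ ≤ CK
  hc0 : 6 * Rm ≤ r * 2 ^ c0

theorem bound_of_ball (f : ℝ×ℝ → ℝ) (hf : Continuous f) (R : ℝ)
    (h0 : ∀ x, R ≤ enorm2 x → f x = 0) : ∃ C, 0 ≤ C ∧ ∀ x, |f x| ≤ C := by
  obtain ⟨C, hC⟩ := (isCompact_Icc (a := ((-R,-R):ℝ×ℝ)) (b := ((R,R):ℝ×ℝ))).exists_bound_of_continuousOn
    hf.continuousOn
  refine ⟨max C 0, le_max_right _ _, fun x => ?_⟩
  by_cases hR : R ≤ enorm2 x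
  · rw [h0 x hR]; simpa using le_max_right C 0
  · push_neg at hR
    have a1 : |x.1| < R := lt_of_le_of_lt (abs_fst_le_enorm2 x) hR
    have a2 : |x.2| < R := lt_of_le_of_lt (abs_snd_le_enorm2 x) hR
    rw [abs_lt] at a1 a2
    have hx : x ∈ Set.Icc ((-R,-R):ℝ×ℝ) ((R,R):ℝ×ℝ) := by
      rw [Set.mem_Icc, Prod.le_def, Prod.le_def]
      exact ⟨⟨a1.1.le, a2.1.le⟩, ⟨a1.2.le, a2.2.le⟩⟩
    exact le_trans (by simpa using hC x hx) (le_max_left _ _)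

theorem exists_ctx (L : LP) : Nonempty (Ctx L) := by
  obtain ⟨Rc, hRc, hchi⟩ := L.chi_ball
  obtain ⟨r, Rr, hrpos, hrR, hrho⟩ := L.rho_annulus
  obtain ⟨C1, hC1n, hC1⟩ := bound_of_ball L.chi L.chi_smooth.continuous Rc hchi
  obtain ⟨C2, hC2n, hC2⟩ := bound_of_ball L.rho L.rho_smooth.continuous (Rr+1)
    (fun x hx => hrho x (Or.inr (by linarith)))
  set Rm := max Rc Rr with hRmdef
  have hRmpos : 0 < Rm := lt_of_lt_of_le hRc (le_max_left _ _)
  obtain ⟨n, hn⟩ := pow_unbounded_of_one_lt (6 * Rm / r) (by norm_num : (1:ℝ) < 2)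
  refine ⟨⟨Rm, r, max C1 C2, max 1 (r⁻¹ * r⁻¹), n, hrpos, hRmpos,
    le_trans hC1n (le_max_left _ _), le_max_left _ _,
    fun x => le_trans (hC1 x) (le_max_left _ _),
    fun x => le_trans (hC2 x) (le_max_right _ _),
    fun x hx => hchi x (le_trans (le_max_left _ _) hx),
    fun x hx => hrho x (Or.inr (lt_of_le_of_lt (le_max_right _ _) hx)),
    fun x hx => hrho x (Or.inl hx),
    le_max_right _ _, ?_⟩⟩
  rw [div_lt_iff₀ hrpos] at hn
  linarith

variable {L : LP}

theorem Ctx.cutB (hC : Ctx L) (j : ℤ) (k : Freq) : ‖L.cut j k‖ ≤ hC.CB := by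
  rw [LP.cut]
  split
  · rw [Complex.norm_real]; exact hC.chiB _
  · rw [Complex.norm_real]; exact hC.rhoB _

theorem Ctx.blockB (hC : Ctx L) (j : ℤ) (a : Dist) (k : Freq) :
    ‖L.block j a k‖ ≤ hC.CB * ‖a k‖ := by
  rw [LP.block_eq_cut, norm_mul]
  exact mul_le_mul_of_nonneg_right (hC.cutB j k) (norm_nonneg _)

theorem Ctx.block_hi (hC : Ctx L) {j : ℤ} (hj : -1 ≤ j) (a : Dist) {k : Freq}
    (h : 2*hC.Rm*(2:ℝ)^j < freqNorm k) : L.block j a k = 0 := by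
  rw [LP.block_eq_cut]
  rcases eq_or_lt_of_le hj with he | hj0
  · have hj' : j = -1 := he.symm
    subst hj'
    have h2 : (2:ℝ)^(-1:ℤ) = 1/2 := by norm_num
    rw [h2] at h
    have : L.chi (toR k) = 0 := hC.chi0 _ (by rw [← freqNorm]; linarith)
    rw [LP.cut, if_pos rfl, this]
    simp
  · have hj1 : j ≠ -1 := by omega
    have hu : (0:ℝ) < (2:ℝ)^j := zpow_pos (by norm_num) j
    have huinv : (0:ℝ) < (2:ℝ)^(-j) := zpow_pos (by norm_num) _
    have hmul : (2:ℝ)^(-j) * (2:ℝ)^j = 1 := by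
      rw [← zpow_add₀ (by norm_num : (2:ℝ) ≠ 0)]; simp
    have : L.rho ((2:ℝ)^(-j) • toR k) = 0 := by
      apply hC.rho0hi
      rw [enorm2_smul _ (le_of_lt huinv), ← freqNorm]
      have h1 : (2:ℝ)^(-j) * (2*hC.Rm*(2:ℝ)^j) < (2:ℝ)^(-j) * freqNorm k :=
        (mul_lt_mul_iff_right₀ huinv).mpr h
      have h2 : (2:ℝ)^(-j) * (2*hC.Rm*(2:ℝ)^j) = 2*hC.Rm := by
        rw [show (2:ℝ)^(-j) * (2*hC.Rm*(2:ℝ)^j) = ((2:ℝ)^(-j)*(2:ℝ)^j)*(2*hC.Rm) by ring,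
          hmul, one_mul]
      nlinarith [hC.hRm]
    rw [LP.cut, if_neg hj1, this]
    simp

theorem Ctx.block_lo (hC : Ctx L) {j : ℤ} (hj : 0 ≤ j) (a : Dist) {k : Freq}
    (h : freqNorm k < hC.r * (2:ℝ)^j) : L.block j a k = 0 := by
  have hj1 : j ≠ -1 := by omega
  have hu : (0:ℝ) < (2:ℝ)^j := zpow_pos (by norm_num) j
  have huinv : (0:ℝ) < (2:ℝ)^(-j) := zpow_pos (by norm_num) _
  have hmul : (2:ℝ)^(-j) * (2:ℝ)^j = 1 := by
    rw [← zpow_add₀ (by norm_num : (2:ℝ) ≠ 0)]; simp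
  rw [LP.block_eq_cut]
  have : L.rho ((2:ℝ)^(-j) • toR k) = 0 := by
    apply hC.rho0lo
    rw [enorm2_smul _ (le_of_lt huinv), ← freqNorm]
    have h1 : (2:ℝ)^(-j) * freqNorm k < (2:ℝ)^(-j) * (hC.r * (2:ℝ)^j) :=
      (mul_lt_mul_iff_right₀ huinv).mpr h
    have h2 : (2:ℝ)^(-j) * (hC.r * (2:ℝ)^j) = hC.r := by
      rw [show (2:ℝ)^(-j) * (hC.r*(2:ℝ)^j) = ((2:ℝ)^(-j)*(2:ℝ)^j)*hC.r by ring, hmul, one_mul]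
    linarith
  rw [LP.cut, if_neg hj1, this]
  simp

theorem Ctx.Kblock (hC : Ctx L) {j : ℤ} (hj : -1 ≤ j) (η : Dist) (k : Freq) :
    ‖L.block j (Kop η) k‖ ≤ hC.CB * hC.CK * (4:ℝ)^(-j) * ‖η k‖ := by
  have h4 : (0:ℝ) < (4:ℝ)^(-j) := zpow_pos (by norm_num) _
  have hCK0 : (0:ℝ) < hC.CK := lt_of_lt_of_le one_pos hC.hCK
  by_cases hk : k = 0
  · subst hk
    have : Kop η 0 = 0 := by simp [Kop]
    rw [LP.block_eq_cut, this, mul_zero, norm_zero]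
    exact mul_nonneg (mul_nonneg (mul_nonneg hC.hCB (le_of_lt hCK0)) (le_of_lt h4)) (norm_nonneg _)
  · have hknorm : ‖Kop η k‖ = ‖η k‖ / freqNorm k^2 := by
      rw [Kop, if_neg hk, norm_div]
      congr 1
      rw [Complex.norm_real]
      exact abs_of_nonneg (by positivity)
    have h1 : (1:ℝ) ≤ freqNorm k := one_le_freqNorm hk
    rcases eq_or_lt_of_le hj with he | hj0
    · -- j = -1
      have hj' : j = -1 := he.symm
      subst hj'
      have h4' : (4:ℝ)^(-(-1:ℤ)) = 4 := by norm_num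
      rw [h4']
      calc ‖L.block (-1) (Kop η) k‖ ≤ hC.CB * ‖Kop η k‖ := hC.blockB _ _ _
        _ ≤ hC.CB * ‖η k‖ := by
            apply mul_le_mul_of_nonneg_left _ hC.hCB
            rw [hknorm]
            apply div_le_self (norm_nonneg _)
            nlinarith
        _ ≤ hC.CB * hC.CK * 4 * ‖η k‖ := by
            nlinarith [mul_nonneg hC.hCB (norm_nonneg (η k)), hC.hCK,
              mul_nonneg (mul_nonneg hC.hCB (norm_nonneg (η k))) (show (0:ℝ) ≤ hC.CK*4-1 by nlinarith [hC.hCK])]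
    · -- 0 ≤ j
      have hj2 : (0:ℤ) ≤ j := by omega
      by_cases hcut : L.cut j k = 0
      · rw [LP.block_eq_cut, hcut, zero_mul, norm_zero]
        exact mul_nonneg (mul_nonneg (mul_nonneg hC.hCB (le_of_lt hCK0)) (le_of_lt h4)) (norm_nonneg _)
      · -- rho is nonzero at 2^{-j} k, so r 2^j ≤ |k|
        have hj1 : j ≠ -1 := by omega
        have hrhone : L.rho ((2:ℝ)^(-j) • toR k) ≠ 0 := by
          rw [LP.cut, if_neg hj1] at hcut
          exact fun hz => hcut (by rw [hz]; simp)
        have hu : (0:ℝ) < (2:ℝ)^j := zpow_pos (by norm_num) j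
        have huinv : (0:ℝ) < (2:ℝ)^(-j) := zpow_pos (by norm_num) _
        have hmul : (2:ℝ)^(-j) * (2:ℝ)^j = 1 := by
          rw [← zpow_add₀ (by norm_num : (2:ℝ) ≠ 0)]; simp
        have hlow : hC.r * (2:ℝ)^j ≤ freqNorm k := by
          by_contra hcon
          push_neg at hcon
          exact hrhone (by
            apply hC.rho0lo
            rw [enorm2_smul _ (le_of_lt huinv), ← freqNorm]
            have := (mul_lt_mul_iff_right₀ huinv).mpr hcon
            have h2 : (2:ℝ)^(-j) * (hC.r * (2:ℝ)^j) = hC.r := by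
              rw [show (2:ℝ)^(-j) * (hC.r*(2:ℝ)^j) = ((2:ℝ)^(-j)*(2:ℝ)^j)*hC.r by ring, hmul, one_mul]
            linarith)
        have hfour : (4:ℝ)^j = (2:ℝ)^j * (2:ℝ)^j := by
          rw [show (4:ℝ) = 2*2 by norm_num, mul_zpow]
        have hfour' : (4:ℝ)^(-j) = ((2:ℝ)^j * (2:ℝ)^j)⁻¹ := by
          rw [← hfour, zpow_neg]
        have hinv : 1 / freqNorm k^2 ≤ hC.CK * (4:ℝ)^(-j) := by
          have hk2 : hC.r^2 * ((2:ℝ)^j * (2:ℝ)^j) ≤ freqNorm k^2 := by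
            nlinarith [mul_self_le_mul_self (le_of_lt (mul_pos hC.hr hu)) hlow]
          have hpos : (0:ℝ) < hC.r^2 * ((2:ℝ)^j * (2:ℝ)^j) := by
            have := mul_pos hC.hr hu
            nlinarith [mul_pos hC.hr hC.hr, mul_pos hu hu]
          have := one_div_le_one_div_of_le hpos hk2
          calc 1/freqNorm k^2 ≤ 1/(hC.r^2 * ((2:ℝ)^j * (2:ℝ)^j)) := this
            _ = (hC.r⁻¹ * hC.r⁻¹) * ((2:ℝ)^j * (2:ℝ)^j)⁻¹ := by
                rw [one_div, sq, mul_inv, mul_inv]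
            _ ≤ hC.CK * (4:ℝ)^(-j) := by
                rw [hfour']
                apply mul_le_mul_of_nonneg_right hC.hCKr (by positivity)
        calc ‖L.block j (Kop η) k‖ ≤ hC.CB * ‖Kop η k‖ := hC.blockB _ _ _
          _ = hC.CB * (‖η k‖ * (1/freqNorm k^2)) := by rw [hknorm]; ring_nf
          _ ≤ hC.CB * (‖η k‖ * (hC.CK * (4:ℝ)^(-j))) := by
              apply mul_le_mul_of_nonneg_left _ hC.hCB
              exact mul_le_mul_of_nonneg_left hinv (norm_nonneg _)
          _ = hC.CB * hC.CK * (4:ℝ)^(-j) * ‖η k‖ := by ring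

end GPAM
namespace GPAM

variable {L : LP}

/-! ### The resonant family -/

def resF (L : LP) (f g : Dist) (k : Freq) (ij : ℤ × ℤ) : ℂ :=
  if -1 ≤ ij.1 ∧ -1 ≤ ij.2 ∧ |ij.1 - ij.2| ≤ 1 then
    mulD (L.block ij.1 f) (L.block ij.2 g) k
  else 0

theorem reson_eq (f g : Dist) (k : Freq) : L.reson f g k = ∑' ij : ℤ × ℤ, resF L f g k ij := rfl

/-! ### Geometric sums on `ℤ` -/

def geoZ (a : ℤ) : ℤ → ℝ := fun i => if a ≤ i then (2:ℝ)^(-i) else 0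

theorem geoZ_nonneg (a i : ℤ) : 0 ≤ geoZ a i := by
  rw [geoZ]; split
  · exact le_of_lt (zpow_pos (by norm_num) _)
  · exact le_refl 0

theorem geoZ_apply_le {a i : ℤ} (h : a ≤ i) : geoZ a i = (2:ℝ)^(-i) := if_pos h

private theorem geoZ_inj (a : ℤ) : Function.Injective (fun n : ℕ => a + (n:ℤ)) := by
  intro m n h; simpa using h

private theorem geoZ_supp (a : ℤ) :
    ∀ x ∉ Set.range (fun n : ℕ => a + (n:ℤ)), geoZ a x = 0 := by
  intro x hx
  rw [geoZ, if_neg]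
  intro hax
  exact hx ⟨(x - a).toNat, by show a + ((x - a).toNat : ℤ) = x; omega⟩

private theorem geoZ_comp (a : ℤ) (n : ℕ) :
    geoZ a ((fun n : ℕ => a + (n:ℤ)) n) = (2:ℝ)^(-a) * ((2:ℝ)⁻¹)^n := by
  show geoZ a (a + n) = _
  rw [geoZ_apply_le (by omega)]
  rw [neg_add, zpow_add₀ (by norm_num : (2:ℝ) ≠ 0)]
  congr 1
  rw [zpow_neg, zpow_natCast, inv_pow]

theorem summable_geoZ (a : ℤ) : Summable (geoZ a) := by
  rw [← (geoZ_inj a).summable_iff (geoZ_supp a)]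
  have : (geoZ a ∘ fun n : ℕ => a + (n:ℤ)) = fun n : ℕ => (2:ℝ)^(-a) * ((2:ℝ)⁻¹)^n := by
    funext n; exact geoZ_comp a n
  rw [this]
  exact (summable_geometric_of_lt_one (by norm_num) (by norm_num)).mul_left _

theorem tsum_geoZ (a : ℤ) : ∑' i, geoZ a i = (2:ℝ)^(-a) * 2 := by
  rw [← (geoZ_inj a).tsum_eq (Function.support_subset_iff'.mpr (geoZ_supp a))]
  have : (fun n : ℕ => geoZ a ((fun n : ℕ => a + (n:ℤ)) n))
      = fun n : ℕ => (2:ℝ)^(-a) * ((2:ℝ)⁻¹)^n := by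
    funext n; exact geoZ_comp a n
  rw [show ∑' (n : ℕ), geoZ a ((fun n : ℕ => a + (n:ℤ)) n)
      = ∑' (n : ℕ), (2:ℝ)^(-a) * ((2:ℝ)⁻¹)^n from tsum_congr fun n => geoZ_comp a n]
  rw [tsum_mul_left, tsum_geometric_of_lt_one (by norm_num) (by norm_num)]
  norm_num

def geoP (a : ℤ) (M : ℝ) : ℤ × ℤ → ℝ := fun ij => M * (geoZ a ij.1 * geoZ (a-1) ij.2)

theorem geoP_nonneg {M : ℝ} (hM : 0 ≤ M) (a : ℤ) (ij : ℤ × ℤ) : 0 ≤ geoP a M ij :=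
  mul_nonneg hM (mul_nonneg (geoZ_nonneg _ _) (geoZ_nonneg _ _))

theorem summable_geoP (a : ℤ) (M : ℝ) : Summable (geoP a M) :=
  ((summable_geoZ a).mul_of_nonneg (summable_geoZ (a-1))
    (fun _ => geoZ_nonneg _ _) (fun _ => geoZ_nonneg _ _)).mul_left M

theorem tsum_geoP (a : ℤ) (M : ℝ) : ∑' ij, geoP a M ij = M * (8 * (4:ℝ)^(-a)) := by
  simp only [geoP]
  rw [tsum_mul_left]
  congr 1
  have hs : Summable (fun ij : ℤ×ℤ => geoZ a ij.1 * geoZ (a-1) ij.2) :=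
    (summable_geoZ a).mul_of_nonneg (summable_geoZ (a-1))
      (fun _ => geoZ_nonneg _ _) (fun _ => geoZ_nonneg _ _)
  rw [Summable.tsum_prod hs]
  have : ∀ i : ℤ, ∑' j, geoZ a i * geoZ (a-1) j = geoZ a i * ((2:ℝ)^(-(a-1)) * 2) := by
    intro i; rw [tsum_mul_left, tsum_geoZ]
  rw [tsum_congr this, tsum_mul_right, tsum_geoZ]
  have h1 : (2:ℝ)^(-(a-1)) = (2:ℝ)^(-a) * 2 := by
    rw [show -(a-1) = -a + 1 by ring, zpow_add₀ (by norm_num : (2:ℝ) ≠ 0)]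
    norm_num
  have h2 : (4:ℝ)^(-a) = (2:ℝ)^(-a) * (2:ℝ)^(-a) := by
    rw [show (4:ℝ) = 2*2 by norm_num, mul_zpow]
  rw [h1, h2]
  ring

/-! ### Bounds for `mulD` of blocks -/

theorem Ctx.mulD_norm_le (hC : Ctx L) {θ η : Dist} (hθ : Summable fun k => ‖θ k‖^2)
    (hη : Summable fun k => ‖η k‖^2) {i j : ℤ} (hi : -1 ≤ i) (hj : -1 ≤ j) (k : Freq) :
    ‖mulD (L.block i θ) (L.block j (Kop η)) k‖ ≤
      hC.CB^2 * hC.CK * (4:ℝ)^(-j) * (l2norm θ * l2norm η) := by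
  classical
  set T := FsF (2*hC.Rm*(2:ℝ)^j) with hT
  set b := L.block j (Kop η) with hbdef
  have hb : ∀ q ∉ T, b q = 0 := fun q hq => hC.block_hi hj _ (not_mem_FsF hq)
  set U := T.image (fun q => k - q) with hU
  have hsupp : ∀ p ∉ U, L.block i θ p * b (k - p) = 0 := by
    intro p hp
    have : k - p ∉ T := by
      intro hmem
      exact hp (Finset.mem_image.mpr ⟨k - p, hmem, by abel⟩)
    rw [hb _ this, mul_zero]
  have hinj : ∀ x ∈ T, ∀ y ∈ T, k - x = k - y → x = y := by
    intro x _ y _ hxy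
    have : k - (k - x) = k - (k - y) := by rw [hxy]
    simpa using this
  have hrw : mulD (L.block i θ) b k = ∑ q ∈ T, L.block i θ (k - q) * b (k - (k - q)) := by
    rw [mulD, tsum_eq_sum hsupp, ← Finset.sum_image (g := fun q => k - q)
      (f := fun p => L.block i θ p * b (k - p)) hinj]
  have hsimp : ∀ q : Freq, k - (k - q) = q := fun q => by abel
  rw [hrw]
  have step1 : ‖∑ q ∈ T, L.block i θ (k - q) * b (k - (k - q))‖
      ≤ ∑ q ∈ T, ‖L.block i θ (k - q)‖ * ‖b q‖ := by
    refine (norm_sum_le _ _).trans (le_of_eq (Finset.sum_congr rfl fun q _ => ?_))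
    rw [hsimp q, norm_mul]
  have step2 : ∑ q ∈ T, ‖L.block i θ (k - q)‖ * ‖b q‖
      ≤ Real.sqrt (∑ q ∈ T, ‖L.block i θ (k - q)‖^2) * Real.sqrt (∑ q ∈ T, ‖b q‖^2) :=
    Real.sum_mul_le_sqrt_mul_sqrt _ _ _
  have hA : ∑ q ∈ T, ‖L.block i θ (k - q)‖^2 ≤ hC.CB^2 * ∑' p, ‖θ p‖^2 := by
    calc ∑ q ∈ T, ‖L.block i θ (k - q)‖^2 ≤ ∑ q ∈ T, hC.CB^2 * ‖θ (k - q)‖^2 := by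
          refine Finset.sum_le_sum fun q _ => ?_
          have h := hC.blockB i θ (k - q)
          nlinarith [norm_nonneg (L.block i θ (k - q)), norm_nonneg (θ (k - q)), hC.hCB]
      _ = hC.CB^2 * ∑ q ∈ T, ‖θ (k - q)‖^2 := by rw [Finset.mul_sum]
      _ ≤ hC.CB^2 * ∑' p, ‖θ p‖^2 := by
          exact mul_le_mul_of_nonneg_left (sum_sq_shift hθ T k) (sq_nonneg _)
  have hB : ∑ q ∈ T, ‖b q‖^2 ≤ (hC.CB * hC.CK * (4:ℝ)^(-j))^2 * ∑' p, ‖η p‖^2 := by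
    calc ∑ q ∈ T, ‖b q‖^2 ≤ ∑ q ∈ T, (hC.CB * hC.CK * (4:ℝ)^(-j))^2 * ‖η q‖^2 := by
          refine Finset.sum_le_sum fun q _ => ?_
          have h := hC.Kblock hj η q
          have h4 : (0:ℝ) < (4:ℝ)^(-j) := zpow_pos (by norm_num) _
          have hCK0 : (0:ℝ) < hC.CK := lt_of_lt_of_le one_pos hC.hCK
          nlinarith [norm_nonneg (b q), norm_nonneg (η q),
            mul_nonneg (mul_nonneg hC.hCB (le_of_lt hCK0)) (le_of_lt h4)]
      _ = (hC.CB * hC.CK * (4:ℝ)^(-j))^2 * ∑ q ∈ T, ‖η q‖^2 := by rw [Finset.mul_sum]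
      _ ≤ _ := mul_le_mul_of_nonneg_left
          (Summable.sum_le_tsum T (fun q _ => sq_nonneg _) hη) (sq_nonneg _)
  have h4 : (0:ℝ) < (4:ℝ)^(-j) := zpow_pos (by norm_num) _
  have hCK0 : (0:ℝ) < hC.CK := lt_of_lt_of_le one_pos hC.hCK
  have hsqA : Real.sqrt (∑ q ∈ T, ‖L.block i θ (k - q)‖^2) ≤ hC.CB * l2norm θ := by
    refine (Real.sqrt_le_sqrt hA).trans (le_of_eq ?_)
    rw [Real.sqrt_mul (sq_nonneg _), Real.sqrt_sq hC.hCB, l2norm]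
  have hsqB : Real.sqrt (∑ q ∈ T, ‖b q‖^2) ≤ hC.CB * hC.CK * (4:ℝ)^(-j) * l2norm η := by
    refine (Real.sqrt_le_sqrt hB).trans (le_of_eq ?_)
    have h40 : (0:ℝ) ≤ (4:ℝ)^(-j) := le_of_lt h4
    rw [Real.sqrt_mul (sq_nonneg _), Real.sqrt_sq
      (mul_nonneg (mul_nonneg hC.hCB (le_of_lt hCK0)) h40), l2norm]
  calc ‖∑ q ∈ T, L.block i θ (k - q) * b (k - (k - q))‖
      ≤ Real.sqrt (∑ q ∈ T, ‖L.block i θ (k - q)‖^2) * Real.sqrt (∑ q ∈ T, ‖b q‖^2) :=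
        step1.trans step2
    _ ≤ (hC.CB * l2norm θ) * (hC.CB * hC.CK * (4:ℝ)^(-j) * l2norm η) := by
        apply mul_le_mul hsqA hsqB (Real.sqrt_nonneg _)
        exact mul_nonneg hC.hCB (l2norm_nonneg θ)
    _ = hC.CB^2 * hC.CK * (4:ℝ)^(-j) * (l2norm θ * l2norm η) := by ring

theorem Ctx.mulD_supp (hC : Ctx L) {i j : ℤ} (hi : -1 ≤ i) (hj : -1 ≤ j)
    (θ ψ : Dist) (k : Freq) (h : 2*hC.Rm*(2:ℝ)^i + 2*hC.Rm*(2:ℝ)^j < freqNorm k) :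
    mulD (L.block i θ) (L.block j ψ) k = 0 := by
  have hz : ∀ p : Freq, L.block i θ p * L.block j ψ (k - p) = 0 := by
    intro p
    by_cases hp : 2*hC.Rm*(2:ℝ)^i < freqNorm p
    · rw [hC.block_hi hi θ hp, zero_mul]
    · push_neg at hp
      have htri : freqNorm k ≤ freqNorm p + freqNorm (k - p) := by
        have : p + (k - p) = k := by abel
        calc freqNorm k = freqNorm (p + (k - p)) := by rw [this]
          _ ≤ _ := freqNorm_triangle _ _
      have : 2*hC.Rm*(2:ℝ)^j < freqNorm (k - p) := by linarith
      rw [hC.block_hi hj ψ this, mul_zero]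
  rw [mulD, show (∑' p, L.block i θ p * L.block j ψ (k - p)) = ∑' p : Freq, (0:ℂ) from
    tsum_congr fun p => hz p, tsum_zero]

end GPAM
namespace GPAM

variable {L : LP}

theorem four_zpow_le {i j : ℤ} (h : i ≤ j + 1) :
    (4:ℝ)^(-j) ≤ 2*((2:ℝ)^(-i) * (2:ℝ)^(-j)) := by
  have h2 : (2:ℝ)^(-j) ≤ (2:ℝ)^(-(i-1)) := zpow_le_zpow_right₀ one_le_two (by omega)
  have h3 : (2:ℝ)^(-(i-1)) = 2*(2:ℝ)^(-i) := by
    rw [show -(i-1) = -i+1 by ring, zpow_add₀ (by norm_num : (2:ℝ)≠0)]; ring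
  have h4 : (4:ℝ)^(-j) = (2:ℝ)^(-j)*(2:ℝ)^(-j) := by
    rw [show (4:ℝ) = 2*2 by norm_num, mul_zpow]
  have hp : (0:ℝ) ≤ (2:ℝ)^(-j) := le_of_lt (zpow_pos (by norm_num) _)
  calc (4:ℝ)^(-j) = (2:ℝ)^(-j)*(2:ℝ)^(-j) := h4
    _ ≤ (2*(2:ℝ)^(-i))*(2:ℝ)^(-j) :=
        mul_le_mul_of_nonneg_right (h2.trans (le_of_eq h3)) hp
    _ = 2*((2:ℝ)^(-i) * (2:ℝ)^(-j)) := by ring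

theorem Ctx.resF_dom0 (hC : Ctx L) {θ η : Dist} (hθ : Summable fun k => ‖θ k‖^2)
    (hη : Summable fun k => ‖η k‖^2) (k : Freq) :
    ∀ ij : ℤ × ℤ, ‖resF L θ (Kop η) k ij‖ ≤
      geoP (-1) (2 * hC.CB^2 * hC.CK * (l2norm θ * l2norm η)) ij := by
  have hCK0 : (0:ℝ) < hC.CK := lt_of_lt_of_le one_pos hC.hCK
  have hM : (0:ℝ) ≤ 2 * hC.CB^2 * hC.CK * (l2norm θ * l2norm η) :=
    mul_nonneg (mul_nonneg (mul_nonneg (by norm_num) (sq_nonneg _)) hCK0.le)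
      (mul_nonneg (l2norm_nonneg θ) (l2norm_nonneg η))
  rintro ⟨i, j⟩
  rw [resF]
  by_cases hcond : -1 ≤ i ∧ -1 ≤ j ∧ |i - j| ≤ 1
  · rw [if_pos hcond]
    obtain ⟨hi, hj, hij⟩ := hcond
    have hij' := abs_le.mp hij
    have hgi : geoZ (-1) i = (2:ℝ)^(-i) := geoZ_apply_le hi
    have hgj : geoZ ((-1)-1) j = (2:ℝ)^(-j) := geoZ_apply_le (by omega)
    have h1 := hC.mulD_norm_le hθ hη hi hj k
    have h2 := four_zpow_le (show i ≤ j + 1 by omega)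
    have hX : (0:ℝ) ≤ l2norm θ * l2norm η := mul_nonneg (l2norm_nonneg θ) (l2norm_nonneg η)
    have h3 : hC.CB^2 * hC.CK * (4:ℝ)^(-j) * (l2norm θ * l2norm η)
        ≤ hC.CB^2 * hC.CK * (2*((2:ℝ)^(-i) * (2:ℝ)^(-j))) * (l2norm θ * l2norm η) := by
      apply mul_le_mul_of_nonneg_right _ hX
      exact mul_le_mul_of_nonneg_left h2 (mul_nonneg (sq_nonneg _) hCK0.le)
    refine h1.trans (h3.trans (le_of_eq ?_))
    rw [geoP]
    rw [hgi, hgj]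
    ring
  · rw [if_neg hcond, norm_zero]
    exact geoP_nonneg hM _ _

theorem Ctx.summable_resF_norm (hC : Ctx L) {θ η : Dist} (hθ : Summable fun k => ‖θ k‖^2)
    (hη : Summable fun k => ‖η k‖^2) (k : Freq) :
    Summable (fun ij => ‖resF L θ (Kop η) k ij‖) :=
  Summable.of_nonneg_of_le (fun _ => norm_nonneg _) (hC.resF_dom0 hθ hη k)
    (summable_geoP _ _)

theorem Ctx.summable_resF (hC : Ctx L) {θ η : Dist} (hθ : Summable fun k => ‖θ k‖^2)
    (hη : Summable fun k => ‖η k‖^2) (k : Freq) :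
    Summable (resF L θ (Kop η) k) :=
  Summable.of_norm (hC.summable_resF_norm hθ hη k)

theorem Ctx.resF_dom (hC : Ctx L) {θ η : Dist} (hθ : Summable fun k => ‖θ k‖^2)
    (hη : Summable fun k => ‖η k‖^2) (k : Freq) {m : ℤ} (hm : -1 ≤ m) :
    ∀ ij : ℤ × ℤ, ‖L.cut m k * resF L θ (Kop η) k ij‖ ≤
      geoP (max (-1) (m - hC.c0)) (2 * hC.CB^3 * hC.CK * (l2norm θ * l2norm η)) ij := by
  have hCK0 : (0:ℝ) < hC.CK := lt_of_lt_of_le one_pos hC.hCK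
  set a := max (-1 : ℤ) (m - hC.c0) with hadef
  have hX : (0:ℝ) ≤ l2norm θ * l2norm η := mul_nonneg (l2norm_nonneg θ) (l2norm_nonneg η)
  have hM : (0:ℝ) ≤ 2 * hC.CB^3 * hC.CK * (l2norm θ * l2norm η) :=
    mul_nonneg (mul_nonneg (mul_nonneg (by norm_num) (pow_nonneg hC.hCB 3)) hCK0.le) hX
  rintro ⟨i, j⟩
  rw [resF]
  by_cases hcond : -1 ≤ i ∧ -1 ≤ j ∧ |i - j| ≤ 1
  · obtain ⟨hi, hj, hij⟩ := hcond
    have hij' := abs_le.mp hij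
    rw [if_pos ⟨hi, hj, hij⟩]
    by_cases hia : a ≤ i
    · -- the main estimate
      have hgi : geoZ a i = (2:ℝ)^(-i) := geoZ_apply_le hia
      have hgj : geoZ (a-1) j = (2:ℝ)^(-j) := geoZ_apply_le (by omega)
      have h1 := hC.mulD_norm_le hθ hη hi hj k
      have h2 := four_zpow_le (show i ≤ j + 1 by omega)
      have hcut := hC.cutB m k
      rw [norm_mul]
      calc ‖L.cut m k‖ * ‖mulD (L.block i θ) (L.block j (Kop η)) k‖
          ≤ hC.CB * (hC.CB^2 * hC.CK * (4:ℝ)^(-j) * (l2norm θ * l2norm η)) := by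
            apply mul_le_mul hcut h1 (norm_nonneg _) hC.hCB
        _ ≤ hC.CB * (hC.CB^2 * hC.CK * (2*((2:ℝ)^(-i) * (2:ℝ)^(-j))) * (l2norm θ * l2norm η)) := by
            apply mul_le_mul_of_nonneg_left _ hC.hCB
            apply mul_le_mul_of_nonneg_right _ hX
            exact mul_le_mul_of_nonneg_left h2 (mul_nonneg (sq_nonneg _) hCK0.le)
        _ = geoP a (2 * hC.CB^3 * hC.CK * (l2norm θ * l2norm η)) (i, j) := by
            rw [geoP, hgi, hgj]; ring
    · -- vanishing case
      push_neg at hia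
      have ham : a = m - hC.c0 := by
        rcases max_cases (-1 : ℤ) (m - hC.c0) with ⟨h1, h2⟩ | ⟨h1, h2⟩ <;> omega
      have hm0 : (0:ℤ) ≤ m := by omega
      have hvanish : L.cut m k * mulD (L.block i θ) (L.block j (Kop η)) k = 0 := by
        by_cases hklow : freqNorm k < hC.r * (2:ℝ)^m
        · have hz := hC.block_lo hm0 (fun _ => (1:ℂ)) hklow
          rw [LP.block_eq_cut, mul_one] at hz
          rw [hz, zero_mul]
        · push_neg at hklow
          have e1 : (2:ℝ)^j ≤ 2*(2:ℝ)^i := by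
            have := zpow_le_zpow_right₀ (one_le_two (α := ℝ)) (show j ≤ i + 1 by omega)
            rwa [zpow_add₀ (by norm_num : (2:ℝ)≠0), zpow_one, mul_comm] at this
          have e2 : (2:ℝ)^i ≤ (2:ℝ)^(m - (hC.c0:ℤ) - 1) :=
            zpow_le_zpow_right₀ one_le_two (by omega)
          have e3 : (2:ℝ)^(m - (hC.c0:ℤ) - 1) * ((2:ℝ)^(hC.c0:ℤ) * 2) = (2:ℝ)^m := by
            rw [show ((2:ℝ)^(hC.c0:ℤ) * 2) = (2:ℝ)^((hC.c0:ℤ)+1) by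
              rw [zpow_add₀ (by norm_num : (2:ℝ)≠0), zpow_one],
              ← zpow_add₀ (by norm_num : (2:ℝ)≠0)]
            congr 1
            ring
          have hc0' : 6 * hC.Rm ≤ hC.r * (2:ℝ)^(hC.c0:ℤ) := by
            have h := hC.hc0
            rwa [← zpow_natCast (2:ℝ) hC.c0] at h
          have hsupp : 2*hC.Rm*(2:ℝ)^i + 2*hC.Rm*(2:ℝ)^j < freqNorm k := by
            have p1 : (0:ℝ) < (2:ℝ)^i := zpow_pos (by norm_num) _
            have p2 : (0:ℝ) < (2:ℝ)^(m - (hC.c0:ℤ) - 1) := zpow_pos (by norm_num) _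
            have p3 : (0:ℝ) < (2:ℝ)^(hC.c0:ℤ) := zpow_pos (by norm_num) _
            have p4 : (0:ℝ) < (2:ℝ)^m := zpow_pos (by norm_num) _
            have s1 : 2*hC.Rm*(2:ℝ)^i + 2*hC.Rm*(2:ℝ)^j ≤ 6*hC.Rm*(2:ℝ)^i := by
              nlinarith [mul_le_mul_of_nonneg_left e1 (le_of_lt hC.hRm)]
            have s2 : 6*hC.Rm*(2:ℝ)^i ≤ 6*hC.Rm*(2:ℝ)^(m - (hC.c0:ℤ) - 1) := by
              nlinarith [hC.hRm]
            have s3 : 6*hC.Rm*(2:ℝ)^(m - (hC.c0:ℤ) - 1)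
                ≤ (hC.r*(2:ℝ)^(hC.c0:ℤ))*(2:ℝ)^(m - (hC.c0:ℤ) - 1) :=
              mul_le_mul_of_nonneg_right hc0' (le_of_lt p2)
            have s4 : (hC.r*(2:ℝ)^(hC.c0:ℤ))*(2:ℝ)^(m - (hC.c0:ℤ) - 1) = hC.r*(2:ℝ)^m/2 := by
              linear_combination (hC.r / 2) * e3
            have s5 : hC.r*(2:ℝ)^m/2 < hC.r*(2:ℝ)^m := by
              nlinarith [mul_pos hC.hr p4]
            linarith
          rw [hC.mulD_supp hi hj θ (Kop η) k hsupp, mul_zero]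
      rw [hvanish, norm_zero]
      exact geoP_nonneg hM _ _
  · rw [if_neg hcond, mul_zero, norm_zero]
    exact geoP_nonneg hM _ _

theorem Ctx.reson_blk (hC : Ctx L) {θ η : Dist} (hθ : Summable fun k => ‖θ k‖^2)
    (hη : Summable fun k => ‖η k‖^2) {m : ℤ} (hm : -1 ≤ m) (k : Freq) :
    ‖L.block m (L.reson θ (Kop η)) k‖ ≤
      (16 * (4:ℝ)^(hC.c0:ℤ) * hC.CB^3 * hC.CK) * (4:ℝ)^(-m) * (l2norm θ * l2norm η) := by
  set a := max (-1 : ℤ) (m - hC.c0) with hadef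
  set M := 2 * hC.CB^3 * hC.CK * (l2norm θ * l2norm η) with hMdef
  have hX : (0:ℝ) ≤ l2norm θ * l2norm η := mul_nonneg (l2norm_nonneg θ) (l2norm_nonneg η)
  have hCK0 : (0:ℝ) < hC.CK := lt_of_lt_of_le one_pos hC.hCK
  have hM : (0:ℝ) ≤ M := by
    rw [hMdef]
    exact mul_nonneg (mul_nonneg (mul_nonneg (by norm_num) (pow_nonneg hC.hCB 3)) hCK0.le) hX
  have hdom := hC.resF_dom hθ hη k hm
  have hsum : Summable (fun ij => ‖L.cut m k * resF L θ (Kop η) k ij‖) :=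
    Summable.of_nonneg_of_le (fun _ => norm_nonneg _) hdom (summable_geoP a M)
  rw [LP.block_eq_cut, reson_eq, ← tsum_mul_left]
  calc ‖∑' ij, L.cut m k * resF L θ (Kop η) k ij‖
      ≤ ∑' ij, ‖L.cut m k * resF L θ (Kop η) k ij‖ := norm_tsum_le_tsum_norm hsum
    _ ≤ ∑' ij, geoP a M ij := Summable.tsum_le_tsum hdom hsum (summable_geoP a M)
    _ = M * (8 * (4:ℝ)^(-a)) := tsum_geoP a M
    _ ≤ M * (8 * ((4:ℝ)^(hC.c0:ℤ) * (4:ℝ)^(-m))) := by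
        have h1 : (4:ℝ)^(-a) ≤ (4:ℝ)^((hC.c0:ℤ) - m) := by
          apply zpow_le_zpow_right₀ (by norm_num : (1:ℝ) ≤ 4)
          have : m - hC.c0 ≤ a := le_max_right _ _
          omega
        have h2 : (4:ℝ)^((hC.c0:ℤ) - m) = (4:ℝ)^(hC.c0:ℤ) * (4:ℝ)^(-m) := by
          rw [sub_eq_add_neg, zpow_add₀ (by norm_num : (4:ℝ)≠0)]
        rw [← h2]
        nlinarith [h1, hM]
    _ = (16 * (4:ℝ)^(hC.c0:ℤ) * hC.CB^3 * hC.CK) * (4:ℝ)^(-m) * (l2norm θ * l2norm η) := by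
        rw [hMdef]; ring

end GPAM
namespace GPAM

variable {L : LP}

theorem two_zpow_half_le {m : ℤ} (hm : -1 ≤ m) : (1:ℝ)/2 ≤ (2:ℝ)^m := by
  have := zpow_le_zpow_right₀ (one_le_two (α := ℝ)) hm
  rwa [show (2:ℝ)^(-1:ℤ) = 1/2 by norm_num] at this

theorem four_zpow_eq_sq (m : ℤ) : (4:ℝ)^m = ((2:ℝ)^m)^2 := by
  rw [sq, ← mul_zpow]; norm_num

theorem Ctx.card_le (hC : Ctx L) {m : ℤ} (hm : -1 ≤ m) :
    ((FsF (2*hC.Rm*(2:ℝ)^m)).card : ℝ) ≤ (4*hC.Rm+6)^2 * (4:ℝ)^m := by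
  have hp : (0:ℝ) < (2:ℝ)^m := zpow_pos (by norm_num) _
  have hR : (0:ℝ) ≤ 2*hC.Rm*(2:ℝ)^m := by nlinarith [hC.hRm]
  have h1 := card_FsF_le hR
  have h2 : (2*(2*hC.Rm*(2:ℝ)^m)+3)^2 ≤ (4*hC.Rm+6)^2 * (4:ℝ)^m := by
    have h3 : (1:ℝ)/2 ≤ (2:ℝ)^m := two_zpow_half_le hm
    have h4 : 2*(2*hC.Rm*(2:ℝ)^m)+3 ≤ (4*hC.Rm+6) * (2:ℝ)^m := by nlinarith [hC.hRm]
    have h5 : (0:ℝ) ≤ 2*(2*hC.Rm*(2:ℝ)^m)+3 := by nlinarith [hC.hRm]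
    rw [four_zpow_eq_sq]
    calc (2*(2*hC.Rm*(2:ℝ)^m)+3)^2 ≤ ((4*hC.Rm+6) * (2:ℝ)^m)^2 := by nlinarith
      _ = (4*hC.Rm+6)^2 * ((2:ℝ)^m)^2 := by ring
  linarith

theorem Ctx.supNorm_blk_of_bound (hC : Ctx L) {m : ℤ} (hm : -1 ≤ m) (a : Dist) {D : ℝ}
    (hD0 : 0 ≤ D) (hD : ∀ k, ‖L.block m a k‖ ≤ D) :
    supNorm (L.block m a) ≤ (4*hC.Rm+6)^2 * (4:ℝ)^m * D := by
  set F := FsF (2*hC.Rm*(2:ℝ)^m) with hF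
  have hsupp : ∀ k ∉ F, L.block m a k = 0 := fun k hk => hC.block_hi hm a (not_mem_FsF hk)
  refine (supNorm_le_sum hsupp).trans ?_
  calc ∑ k ∈ F, ‖L.block m a k‖ ≤ F.card • D :=
        Finset.sum_le_card_nsmul F _ D (fun k _ => hD k)
    _ = (F.card : ℝ) * D := by rw [nsmul_eq_mul]
    _ ≤ (4*hC.Rm+6)^2 * (4:ℝ)^m * D := mul_le_mul_of_nonneg_right (hC.card_le hm) hD0

theorem Ctx.supNorm_reson (hC : Ctx L) {θ η : Dist} (hθ : Summable fun k => ‖θ k‖^2)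
    (hη : Summable fun k => ‖η k‖^2) {m : ℤ} (hm : -1 ≤ m) :
    supNorm (L.block m (L.reson θ (Kop η))) ≤
      ((4*hC.Rm+6)^2 * (16 * (4:ℝ)^(hC.c0:ℤ) * hC.CB^3 * hC.CK)) * (l2norm θ * l2norm η) := by
  have hCK0 : (0:ℝ) < hC.CK := lt_of_lt_of_le one_pos hC.hCK
  have hX : (0:ℝ) ≤ l2norm θ * l2norm η := mul_nonneg (l2norm_nonneg θ) (l2norm_nonneg η)
  have h4 : (0:ℝ) < (4:ℝ)^(-m) := zpow_pos (by norm_num) _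
  have h4' : (0:ℝ) < (4:ℝ)^(hC.c0:ℤ) := zpow_pos (by norm_num) _
  have hCres : (0:ℝ) ≤ 16 * (4:ℝ)^(hC.c0:ℤ) * hC.CB^3 * hC.CK :=
    mul_nonneg (mul_nonneg (mul_nonneg (by norm_num) h4'.le) (pow_nonneg hC.hCB 3)) hCK0.le
  have hD0 : (0:ℝ) ≤ (16 * (4:ℝ)^(hC.c0:ℤ) * hC.CB^3 * hC.CK) * (4:ℝ)^(-m)
      * (l2norm θ * l2norm η) := mul_nonneg (mul_nonneg hCres h4.le) hX
  have h := hC.supNorm_blk_of_bound hm (L.reson θ (Kop η)) hD0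
    (fun k => hC.reson_blk hθ hη hm k)
  refine h.trans (le_of_eq ?_)
  have hmm : (4:ℝ)^m * (4:ℝ)^(-m) = 1 := by
    rw [← zpow_add₀ (by norm_num : (4:ℝ)≠0)]; simp
  calc (4*hC.Rm+6)^2 * (4:ℝ)^m *
        ((16 * (4:ℝ)^(hC.c0:ℤ) * hC.CB^3 * hC.CK) * (4:ℝ)^(-m) * (l2norm θ * l2norm η))
      = ((4*hC.Rm+6)^2 * (16 * (4:ℝ)^(hC.c0:ℤ) * hC.CB^3 * hC.CK) * (l2norm θ * l2norm η))
          * ((4:ℝ)^m * (4:ℝ)^(-m)) := by ring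
    _ = _ := by rw [hmm, mul_one]

theorem Ctx.supNorm_lin (hC : Ctx L) {θ : Dist} (hθ : Summable fun k => ‖θ k‖^2)
    {m : ℤ} (hm : -1 ≤ m) :
    supNorm (L.block m θ) ≤ ((4*hC.Rm+6) * hC.CB) * (2:ℝ)^m * l2norm θ := by
  set F := FsF (2*hC.Rm*(2:ℝ)^m) with hF
  have hsupp : ∀ k ∉ F, L.block m θ k = 0 := fun k hk => hC.block_hi hm θ (not_mem_FsF hk)
  have hp : (0:ℝ) < (2:ℝ)^m := zpow_pos (by norm_num) _
  have hRm6 : (0:ℝ) ≤ 4*hC.Rm+6 := by nlinarith [hC.hRm]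
  refine (supNorm_le_sum hsupp).trans ?_
  have step1 := sum_norm_le_sqrt F (L.block m θ)
  have hsq : ∑ k ∈ F, ‖L.block m θ k‖^2 ≤ hC.CB^2 * ∑' p, ‖θ p‖^2 := by
    calc ∑ k ∈ F, ‖L.block m θ k‖^2 ≤ ∑ k ∈ F, hC.CB^2 * ‖θ k‖^2 := by
          refine Finset.sum_le_sum fun k _ => ?_
          have h := hC.blockB m θ k
          nlinarith [norm_nonneg (L.block m θ k), norm_nonneg (θ k), hC.hCB]
      _ = hC.CB^2 * ∑ k ∈ F, ‖θ k‖^2 := by rw [Finset.mul_sum]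
      _ ≤ hC.CB^2 * ∑' p, ‖θ p‖^2 := mul_le_mul_of_nonneg_left
          (Summable.sum_le_tsum F (fun k _ => sq_nonneg _) hθ) (sq_nonneg _)
  have hsqB : Real.sqrt (∑ k ∈ F, ‖L.block m θ k‖^2) ≤ hC.CB * l2norm θ := by
    refine (Real.sqrt_le_sqrt hsq).trans (le_of_eq ?_)
    rw [Real.sqrt_mul (sq_nonneg _), Real.sqrt_sq hC.hCB, l2norm]
  have hcard : Real.sqrt F.card ≤ (4*hC.Rm+6) * (2:ℝ)^m := by
    refine (Real.sqrt_le_sqrt (hC.card_le hm)).trans (le_of_eq ?_)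
    rw [four_zpow_eq_sq, show (4*hC.Rm+6)^2 * ((2:ℝ)^m)^2 = ((4*hC.Rm+6) * (2:ℝ)^m)^2 by ring,
      Real.sqrt_sq (by nlinarith)]
  refine step1.trans ?_
  calc Real.sqrt F.card * Real.sqrt (∑ k ∈ F, ‖L.block m θ k‖^2)
      ≤ ((4*hC.Rm+6) * (2:ℝ)^m) * (hC.CB * l2norm θ) := by
        apply mul_le_mul hcard hsqB (Real.sqrt_nonneg _) (by nlinarith)
    _ = ((4*hC.Rm+6) * hC.CB) * (2:ℝ)^m * l2norm θ := by ring

/-! ### Besov-level estimates -/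

theorem rpow_int_eq (j : ℕ) : (2:ℝ)^((j:ℤ)-1) = (2:ℝ)^(((j:ℝ)-1) : ℝ) := by
  rw [show ((j:ℝ)-1 : ℝ) = (((j:ℤ)-1 : ℤ) : ℝ) by push_cast; ring, Real.rpow_intCast]

theorem besov_term_reson (hC : Ctx L) {α : ℝ} (hα : α < 1) {θ η : Dist}
    (hθ : Summable fun k => ‖θ k‖^2) (hη : Summable fun k => ‖η k‖^2) (j : ℕ) :
    (2:ℝ)^((2*α-2)*((j:ℝ)-1)) * supNorm (L.block ((j:ℤ)-1) (L.reson θ (Kop η)))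
      ≤ ((2:ℝ)^(2-2*α) * ((4*hC.Rm+6)^2 * (16 * (4:ℝ)^(hC.c0:ℤ) * hC.CB^3 * hC.CK)))
        * (l2norm θ * l2norm η) := by
  have hm : (-1:ℤ) ≤ (j:ℤ)-1 := by omega
  have hjr : (-1:ℝ) ≤ (j:ℝ)-1 := by
    have : (0:ℝ) ≤ (j:ℝ) := Nat.cast_nonneg j
    linarith
  have hexp : (2*α-2)*((j:ℝ)-1) ≤ 2-2*α := by
    have hb : 2*α-2 ≤ 0 := by linarith
    have := mul_le_mul_of_nonpos_left hjr hb
    linarith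
  have hpre : (2:ℝ)^((2*α-2)*((j:ℝ)-1)) ≤ (2:ℝ)^(2-2*α : ℝ) :=
    Real.rpow_le_rpow_of_exponent_le one_le_two hexp
  have hsup := hC.supNorm_reson hθ hη hm
  have hpre0 : (0:ℝ) ≤ (2:ℝ)^((2*α-2)*((j:ℝ)-1)) := (Real.rpow_pos_of_pos two_pos _).le
  calc (2:ℝ)^((2*α-2)*((j:ℝ)-1)) * supNorm (L.block ((j:ℤ)-1) (L.reson θ (Kop η)))
      ≤ (2:ℝ)^(2-2*α : ℝ) *
          (((4*hC.Rm+6)^2 * (16 * (4:ℝ)^(hC.c0:ℤ) * hC.CB^3 * hC.CK)) * (l2norm θ * l2norm η)) :=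
        mul_le_mul hpre hsup (supNorm_nonneg _) (Real.rpow_pos_of_pos two_pos _).le
    _ = _ := by ring

theorem besov_term_lin (hC : Ctx L) {α : ℝ} (hα : α < 1) {θ : Dist}
    (hθ : Summable fun k => ‖θ k‖^2) (j : ℕ) :
    (2:ℝ)^((α-2)*((j:ℝ)-1)) * supNorm (L.block ((j:ℤ)-1) θ)
      ≤ ((2:ℝ)^(1-α) * ((4*hC.Rm+6) * hC.CB)) * l2norm θ := by
  have hm : (-1:ℤ) ≤ (j:ℤ)-1 := by omega
  have hjr : (-1:ℝ) ≤ (j:ℝ)-1 := by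
    have : (0:ℝ) ≤ (j:ℝ) := Nat.cast_nonneg j
    linarith
  have hRm6 : (0:ℝ) ≤ 4*hC.Rm+6 := by nlinarith [hC.hRm]
  have hsup := hC.supNorm_lin hθ hm
  have hpre0 : (0:ℝ) ≤ (2:ℝ)^((α-2)*((j:ℝ)-1)) := (Real.rpow_pos_of_pos two_pos _).le
  calc (2:ℝ)^((α-2)*((j:ℝ)-1)) * supNorm (L.block ((j:ℤ)-1) θ)
      ≤ (2:ℝ)^((α-2)*((j:ℝ)-1)) * (((4*hC.Rm+6) * hC.CB) * (2:ℝ)^((j:ℤ)-1) * l2norm θ) :=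
        mul_le_mul_of_nonneg_left hsup hpre0
    _ = (((4*hC.Rm+6) * hC.CB) * l2norm θ) *
          ((2:ℝ)^((α-2)*((j:ℝ)-1)) * (2:ℝ)^(((j:ℝ)-1) : ℝ)) := by
        rw [rpow_int_eq]; ring
    _ ≤ (((4*hC.Rm+6) * hC.CB) * l2norm θ) * (2:ℝ)^(1-α : ℝ) := by
        apply mul_le_mul_of_nonneg_left _ (mul_nonneg (mul_nonneg hRm6 hC.hCB) (l2norm_nonneg _))
        rw [← Real.rpow_add two_pos]
        apply Real.rpow_le_rpow_of_exponent_le one_le_two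
        have hb : α-1 ≤ 0 := by linarith
        have h1 : (α-2)*((j:ℝ)-1) + ((j:ℝ)-1) = (α-1)*((j:ℝ)-1) := by ring
        have := mul_le_mul_of_nonpos_left hjr hb
        linarith
    _ = ((2:ℝ)^(1-α) * ((4*hC.Rm+6) * hC.CB)) * l2norm θ := by ring

end GPAM
namespace GPAM

variable {L : LP}

theorem LP.block_neg (L : LP) (j : ℤ) (u : Dist) : L.block j (-u) = -(L.block j u) := by
  funext k
  simp only [LP.block_eq_cut, Pi.neg_apply]
  ring

theorem supNorm_neg (a : Dist) : supNorm (-a) = supNorm a := by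
  rw [supNorm, supNorm]
  apply iSup_congr
  intro x
  have : eval (-a) x = -(eval a x) := by
    rw [eval, eval, ← tsum_neg]
    exact tsum_congr fun k => by rw [Pi.neg_apply]; ring
  rw [this, norm_neg]

theorem eval_add {a b : Dist} {F : Finset Freq} (ha : ∀ k ∉ F, a k = 0)
    (hb : ∀ k ∉ F, b k = 0) (x : ℝ × ℝ) : eval (a + b) x = eval a x + eval b x := by
  rw [eval_eq_sum (F := F) (fun k hk => by rw [Pi.add_apply, ha k hk, hb k hk, add_zero]),
    eval_eq_sum ha, eval_eq_sum hb, ← Finset.sum_add_distrib]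
  exact Finset.sum_congr rfl fun k _ => by rw [Pi.add_apply]; ring

theorem Ctx.supNorm_block_add (hC : Ctx L) {m : ℤ} (hm : -1 ≤ m) (u v : Dist) :
    supNorm (L.block m (u + v)) ≤ supNorm (L.block m u) + supNorm (L.block m v) := by
  set F := FsF (2*hC.Rm*(2:ℝ)^m) with hF
  have hu : ∀ k ∉ F, L.block m u k = 0 := fun k hk => hC.block_hi hm u (not_mem_FsF hk)
  have hv : ∀ k ∉ F, L.block m v k = 0 := fun k hk => hC.block_hi hm v (not_mem_FsF hk)
  have bddu : BddAbove (Set.range fun x : ℝ×ℝ => ‖eval (L.block m u) x‖) :=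
    ⟨∑ k ∈ F, ‖L.block m u k‖, by rintro y ⟨x, rfl⟩; exact norm_eval_le_sum hu x⟩
  have bddv : BddAbove (Set.range fun x : ℝ×ℝ => ‖eval (L.block m v) x‖) :=
    ⟨∑ k ∈ F, ‖L.block m v k‖, by rintro y ⟨x, rfl⟩; exact norm_eval_le_sum hv x⟩
  apply ciSup_le
  intro x
  rw [LP.block_add, eval_add hu hv x]
  exact (norm_add_le _ _).trans (add_le_add (le_ciSup bddu x) (le_ciSup bddv x))

theorem besov_term_nonneg (L : LP) (β : ℝ) (a : Dist) (j : ℕ) :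
    0 ≤ (2:ℝ)^(β*((j:ℝ)-1)) * supNorm (L.block ((j:ℤ)-1) a) :=
  mul_nonneg (Real.rpow_pos_of_pos two_pos _).le (supNorm_nonneg _)

theorem Ctx.besov_add_le (hC : Ctx L) {β : ℝ} (x y : Dist) {C : ℝ}
    (hy : ∀ j : ℕ, (2:ℝ)^(β*((j:ℝ)-1)) * supNorm (L.block ((j:ℤ)-1) y) ≤ C) :
    L.besov β (x + y) ≤ L.besov β x + C := by
  set f := fun j : ℕ => (2:ℝ)^(β*((j:ℝ)-1)) * supNorm (L.block ((j:ℤ)-1) (x + y)) with hfd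
  set g := fun j : ℕ => (2:ℝ)^(β*((j:ℝ)-1)) * supNorm (L.block ((j:ℤ)-1) x) with hgd
  have hm : ∀ j : ℕ, (-1:ℤ) ≤ (j:ℤ)-1 := fun j => by omega
  have hsub : ∀ j : ℕ, f j ≤ g j + (2:ℝ)^(β*((j:ℝ)-1)) * supNorm (L.block ((j:ℤ)-1) y) := by
    intro j
    have h := hC.supNorm_block_add (hm j) x y
    have h2 := mul_le_mul_of_nonneg_left h (Real.rpow_pos_of_pos two_pos (β*((j:ℝ)-1))).le
    rw [mul_add] at h2
    exact h2
  have hC0 : 0 ≤ C := le_trans (besov_term_nonneg L β y 0) (hy 0)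
  by_cases hbdd : BddAbove (Set.range g)
  · apply ciSup_le
    intro j
    exact (hsub j).trans (add_le_add (le_ciSup hbdd j) (hy j))
  · have hg0 : L.besov β x = 0 := Real.iSup_of_not_bddAbove hbdd
    have hxy : (x + y) + (-y) = x := by abel
    have hf : ¬ BddAbove (Set.range f) := by
      rintro ⟨B, hB⟩
      apply hbdd
      refine ⟨B + C, ?_⟩
      rintro z ⟨j, rfl⟩
      have hgf : g j ≤ f j + (2:ℝ)^(β*((j:ℝ)-1)) * supNorm (L.block ((j:ℤ)-1) (-y)) := by
        have h := hC.supNorm_block_add (hm j) (x + y) (-y)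
        rw [hxy] at h
        have h2 := mul_le_mul_of_nonneg_left h (Real.rpow_pos_of_pos two_pos (β*((j:ℝ)-1))).le
        rw [mul_add] at h2
        exact h2
      have hyneg : (2:ℝ)^(β*((j:ℝ)-1)) * supNorm (L.block ((j:ℤ)-1) (-y)) ≤ C := by
        rw [LP.block_neg, supNorm_neg]
        exact hy j
      have hfB : f j ≤ B := hB (Set.mem_range_self j)
      calc g j ≤ f j + (2:ℝ)^(β*((j:ℝ)-1)) * supNorm (L.block ((j:ℤ)-1) (-y)) := hgf
        _ ≤ B + C := add_le_add hfB hyneg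
    have hf0 : L.besov β (x + y) = 0 := Real.iSup_of_not_bddAbove hf
    rw [hf0, hg0]
    linarith

theorem Ctx.besov_sub_tri (hC : Ctx L) {β : ℝ} (a b c : Dist) {C : ℝ}
    (hy : ∀ j : ℕ, (2:ℝ)^(β*((j:ℝ)-1)) * supNorm (L.block ((j:ℤ)-1) (b - c)) ≤ C) :
    L.besov β (a - c) ≤ L.besov β (a - b) + C := by
  have h : (a - b) + (b - c) = a - c := sub_add_sub_cancel a b c
  have := hC.besov_add_le (a - b) (b - c) hy
  rwa [h] at this

end GPAM
namespace GPAM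

variable {L : LP}

/-! ### ℓ² facts -/

theorem l2_sub_summable {a b : Dist} (ha : Summable fun k => ‖a k‖^2)
    (hb : Summable fun k => ‖b k‖^2) : Summable fun k => ‖(a - b) k‖^2 := by
  refine Summable.of_nonneg_of_le (fun k => sq_nonneg _) (fun k => ?_)
    (((ha.add hb)).mul_left 2)
  have h1 : ‖(a - b) k‖ ≤ ‖a k‖ + ‖b k‖ := by
    rw [Pi.sub_apply]; exact norm_sub_le _ _
  nlinarith [norm_nonneg ((a-b) k), norm_nonneg (a k), norm_nonneg (b k),
    sq_nonneg (‖a k‖ - ‖b k‖)]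

theorem l2norm_mono {a b : Dist} (hb : Summable fun k => ‖b k‖^2)
    (h : ∀ k, ‖a k‖ ≤ ‖b k‖) : l2norm a ≤ l2norm b := by
  apply Real.sqrt_le_sqrt
  exact Summable.tsum_le_tsum (fun k => by nlinarith [norm_nonneg (a k), norm_nonneg (b k), h k])
    (Summable.of_nonneg_of_le (fun k => sq_nonneg _)
      (fun k => by nlinarith [norm_nonneg (a k), norm_nonneg (b k), h k]) hb) hb

theorem l2norm_bound_of_sub {a b : Dist} (ha : Summable fun k => ‖a k‖^2)
    (hb : Summable fun k => ‖b k‖^2) :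
    l2norm a ≤ Real.sqrt (2 * l2norm b^2 + 2 * l2norm (a - b)^2) := by
  have hd := l2_sub_summable ha hb
  have hpt : ∀ k, ‖a k‖^2 ≤ 2 * ‖b k‖^2 + 2 * ‖(a - b) k‖^2 := by
    intro k
    have h1 : ‖a k‖ ≤ ‖b k‖ + ‖(a - b) k‖ := by
      have : a k = b k + (a - b) k := by rw [Pi.sub_apply]; ring
      rw [this]; exact norm_add_le _ _
    nlinarith [norm_nonneg (a k), norm_nonneg (b k), norm_nonneg ((a-b) k),
      sq_nonneg (‖b k‖ - ‖(a-b) k‖)]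
  have hsum : ∑' k, ‖a k‖^2 ≤ 2 * l2norm b^2 + 2 * l2norm (a - b)^2 := by
    rw [sq_l2norm, sq_l2norm]
    calc ∑' k, ‖a k‖^2 ≤ ∑' k, (2 * ‖b k‖^2 + 2 * ‖(a - b) k‖^2) :=
          Summable.tsum_le_tsum hpt ha ((hb.mul_left 2).add (hd.mul_left 2))
      _ = 2 * ∑' k, ‖b k‖^2 + 2 * ∑' k, ‖(a - b) k‖^2 := by
          rw [Summable.tsum_add (hb.mul_left 2) (hd.mul_left 2), tsum_mul_left, tsum_mul_left]
  exact Real.sqrt_le_sqrt hsum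

/-! ### Bilinearity of the resonant product -/

theorem Ctx.mulD_sub (hC : Ctx L) {i : ℤ} (hi : -1 ≤ i) (θ θ' b b' : Dist) (k : Freq) :
    mulD (L.block i θ) b k - mulD (L.block i θ') b' k
      = mulD (L.block i (θ - θ')) b k + mulD (L.block i θ') (b - b') k := by
  set F := FsF (2*hC.Rm*(2:ℝ)^i) with hF
  have h1 : ∀ (ψ c : Dist), ∀ p ∉ F, L.block i ψ p * c (k - p) = 0 := fun ψ c p hp => by
    rw [hC.block_hi hi ψ (not_mem_FsF hp), zero_mul]
  rw [mulD, mulD, mulD, mulD, tsum_eq_sum (h1 θ b), tsum_eq_sum (h1 θ' b'),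
    tsum_eq_sum (h1 (θ - θ') b), tsum_eq_sum (h1 θ' (b - b')),
    ← Finset.sum_sub_distrib, ← Finset.sum_add_distrib]
  refine Finset.sum_congr rfl fun p _ => ?_
  simp only [LP.block_eq_cut, Pi.sub_apply]
  ring

theorem Ctx.reson_sub (hC : Ctx L) {θ θ' η η' : Dist}
    (hθ : Summable fun k => ‖θ k‖^2) (hθ' : Summable fun k => ‖θ' k‖^2)
    (hη : Summable fun k => ‖η k‖^2) (hη' : Summable fun k => ‖η' k‖^2) (k : Freq) :
    L.reson θ (Kop η) k - L.reson θ' (Kop η') k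
      = L.reson (θ - θ') (Kop η) k + L.reson θ' (Kop (η - η')) k := by
  have hd : Summable fun k => ‖(θ - θ') k‖^2 := l2_sub_summable hθ hθ'
  have hd' : Summable fun k => ‖(η - η') k‖^2 := l2_sub_summable hη hη'
  rw [reson_eq, reson_eq, reson_eq, reson_eq,
    ← Summable.tsum_sub (hC.summable_resF hθ hη k) (hC.summable_resF hθ' hη' k),
    ← Summable.tsum_add (hC.summable_resF hd hη k) (hC.summable_resF hθ' hd' k)]
  apply tsum_congr
  rintro ⟨i, j⟩
  rw [resF, resF, resF, resF]
  by_cases hcond : -1 ≤ i ∧ -1 ≤ j ∧ |i - j| ≤ 1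
  · rw [if_pos hcond, if_pos hcond, if_pos hcond, if_pos hcond]
    have h := hC.mulD_sub hcond.1 θ θ' (L.block j (Kop η)) (L.block j (Kop η')) k
    rw [← LP.block_sub, ← Kop_sub] at h
    exact h
  · rw [if_neg hcond, if_neg hcond, if_neg hcond, if_neg hcond]
    simp

/-! ### Smooth functions are in ℓ² -/

theorem summable_decay2 : Summable (fun n : ℤ => 1/(1+|(n:ℝ)|)^2) := by
  have hnat : Summable (fun n : ℕ => 1/(1+(n:ℝ))^2) := by
    have hs : Summable (fun n : ℕ => 1/(n:ℝ)^2) :=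
      Real.summable_one_div_nat_pow.mpr (by norm_num : (1:ℕ) < 2)
    have h := (summable_nat_add_iff (f := fun n : ℕ => 1/(n:ℝ)^2) 1).mpr hs
    refine h.congr fun n => ?_
    push_cast
    ring_nf
  apply Summable.of_nat_of_neg
  · exact hnat.congr fun n => by rw [Int.cast_natCast, abs_of_nonneg (Nat.cast_nonneg n)]
  · refine hnat.congr fun n => ?_
    rw [Int.cast_neg, Int.cast_natCast, abs_neg, abs_of_nonneg (Nat.cast_nonneg n)]

theorem summable_decay2_prod :
    Summable (fun k : Freq => (1/(1+|(k.1:ℝ)|)^2) * (1/(1+|(k.2:ℝ)|)^2)) := by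
  have h : ∀ n : ℤ, 0 ≤ 1/(1+|(n:ℝ)|)^2 := fun n => by positivity
  exact Summable.mul_of_nonneg (f := fun n : ℤ => 1/(1+|(n:ℝ)|)^2)
    (g := fun n : ℤ => 1/(1+|(n:ℝ)|)^2) summable_decay2 summable_decay2 h h

theorem IsSmoothZeroMean.isZeroMeanL2 {a : Dist} (h : IsSmoothZeroMean a) : IsZeroMeanL2 a := by
  obtain ⟨h0, hstar, hdecay⟩ := h
  obtain ⟨C, hc⟩ := hdecay 2
  have hC0 : 0 ≤ C := le_trans (by positivity) (hc 0)
  refine ⟨h0, ?_, hstar⟩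
  refine Summable.of_nonneg_of_le (fun k => sq_nonneg _) (fun k => ?_)
    (summable_decay2_prod.mul_left (C^2))
  set P := (1+|(k.1:ℝ)|) * (1+|(k.2:ℝ)|) with hP
  have hP1 : (1:ℝ) ≤ P := by
    have := abs_nonneg (k.1:ℝ); have := abs_nonneg (k.2:ℝ)
    nlinarith
  have hNP : P ≤ (1 + freqNorm k)^2 := by
    have h1 := abs_fst_le_freqNorm k
    have h2 := abs_snd_le_freqNorm k
    have h3 := freqNorm_nonneg k
    nlinarith [abs_nonneg (k.1:ℝ), abs_nonneg (k.2:ℝ)]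
  have hk := hc k
  have ha0 := norm_nonneg (a k)
  have hP0 : (0:ℝ) < P := lt_of_lt_of_le one_pos hP1
  have step1 : ‖a k‖ * P ≤ C := by nlinarith
  have step2 : ‖a k‖^2 * P^2 ≤ C^2 := by nlinarith [mul_nonneg ha0 hP0.le]
  have target : ‖a k‖^2 ≤ C^2 / P^2 := by
    rw [le_div_iff₀ (by positivity)]
    exact step2
  refine target.trans (le_of_eq ?_)
  rw [hP, one_div, one_div, ← mul_inv, ← mul_pow, ← div_eq_mul_inv]

/-! ### Truncation -/

def truncF (θ : Dist) (F : Finset Freq) : Dist := fun k => if k ∈ F ∧ k ≠ 0 then θ k else 0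

def symmF (F : Finset Freq) : Finset Freq := F ∪ F.image (fun k => -k)

theorem mem_symmF {F : Finset Freq} {k : Freq} (h : k ∈ symmF F) : -k ∈ symmF F := by
  rw [symmF, Finset.mem_union] at h ⊢
  rcases h with h | h
  · exact Or.inr (Finset.mem_image.mpr ⟨k, h, rfl⟩)
  · obtain ⟨y, hy, hyk⟩ := Finset.mem_image.mp h
    exact Or.inl (by rw [← hyk, neg_neg]; exact hy)

theorem subset_symmF (F : Finset Freq) : F ⊆ symmF F := Finset.subset_union_left

theorem truncF_smooth {θ : Dist} (hstar : ∀ k, star (θ k) = θ (-k)) (F : Finset Freq) :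
    IsSmoothZeroMean (truncF θ (symmF F)) := by
  refine ⟨by simp [truncF], ?_, ?_⟩
  · intro k
    by_cases h : k ∈ symmF F ∧ k ≠ 0
    · rw [truncF, if_pos h, truncF, if_pos ⟨mem_symmF h.1, neg_ne_zero.mpr h.2⟩]
      exact hstar k
    · have h' : ¬ (-k ∈ symmF F ∧ -k ≠ 0) := by
        intro hcon
        exact h ⟨by simpa using mem_symmF hcon.1, fun hz => hcon.2 (by rw [hz, neg_zero])⟩
      rw [truncF, if_neg h, truncF, if_neg h']
      simp
  · intro n
    refine ⟨∑ k ∈ symmF F, ‖θ k‖ * (1 + freqNorm k)^n, fun k => ?_⟩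
    by_cases h : k ∈ symmF F ∧ k ≠ 0
    · rw [truncF, if_pos h]
      exact Finset.single_le_sum (f := fun k => ‖θ k‖ * (1 + freqNorm k)^n)
        (fun i _ => mul_nonneg (norm_nonneg _) (pow_nonneg (by linarith [freqNorm_nonneg i]) n)) h.1
    · rw [truncF, if_neg h]
      simp only [norm_zero, zero_mul]
      exact Finset.sum_nonneg fun i _ =>
        mul_nonneg (norm_nonneg _) (pow_nonneg (by linarith [freqNorm_nonneg i]) n)

theorem truncF_le (θ : Dist) (F : Finset Freq) (k : Freq) : ‖truncF θ F k‖ ≤ ‖θ k‖ := by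
  rw [truncF]; split
  · exact le_refl _
  · simp

theorem truncF_sub_vanish {θ : Dist} (h0 : θ 0 = 0) (F : Finset Freq) :
    ∀ k ∈ F, ‖(θ - truncF θ F) k‖^2 = 0 := by
  intro k hk
  by_cases hz : k = 0
  · subst hz
    simp [truncF, h0]
  · simp [truncF, hk, hz]

theorem truncF_sub_le (θ : Dist) (F : Finset Freq) (k : Freq) :
    ‖(θ - truncF θ F) k‖^2 ≤ ‖θ k‖^2 := by
  rw [Pi.sub_apply, truncF]
  split
  · simp
  · rw [sub_zero]

/-! ### Small tails -/

theorem exists_tail_small {s : Freq → ℝ} (hs : Summable s) {δ : ℝ} (hδ : 0 < δ) :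
    ∃ S : Finset Freq, ∀ g : Freq → ℝ, (∀ k, 0 ≤ g k) → (∀ k, g k ≤ s k) →
      (∀ k ∈ S, g k = 0) → ∑' k, g k < δ := by
  obtain ⟨S, hS⟩ := summable_iff_vanishing_norm.mp hs (δ/2) (by linarith)
  refine ⟨S, fun g hg0 hgs hgS => ?_⟩
  have hgsum : Summable g :=
    Summable.of_nonneg_of_le hg0 hgs hs
  have hbound : ∀ t : Finset Freq, ∑ k ∈ t, g k ≤ δ/2 := by
    intro t
    have h1 : ∑ k ∈ (t \ S), g k = ∑ k ∈ t, g k := by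
      apply Finset.sum_subset Finset.sdiff_subset
      intro x hx hnx
      apply hgS
      by_contra hxS
      exact hnx (Finset.mem_sdiff.mpr ⟨hx, hxS⟩)
    have h2 : ∑ k ∈ (t \ S), g k ≤ ∑ k ∈ (t \ S), s k :=
      Finset.sum_le_sum fun k _ => hgs k
    have h3 : ∑ k ∈ (t \ S), s k ≤ ‖∑ k ∈ (t \ S), s k‖ := le_abs_self _
    have h4 := hS (t \ S) Finset.sdiff_disjoint
    linarith
  calc ∑' k, g k ≤ δ/2 := Summable.tsum_le_of_sum_le hgsum hbound
    _ < δ := by linarith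

end GPAM


/-- **Lemma 2.6 (alternative description of `𝒳^α`)**: for `α < 1`, `𝒳^α` is also the
closure in `ℋ^α` of `{(θ, θ∘Kθ - c) : θ ∈ ℋ, c ∈ ℝ}`; in particular for `θ ∈ ℋ` the
resonant product `θ∘Kθ` is a well-defined element of `𝒞^{2α-2}` with
`‖θ∘Kθ‖_{2α-2} ≲ ‖θ‖²_{L²}`, and `θ^ε → θ` in `L²` implies convergence of the lifts
in `ℋ^α`. -/
theorem Xspace_eq_closure_of_CameronMartin_lifts (L : GPAM.LP) (α : ℝ) (hα : α < 1) :
    (GPAM.Xspace L α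
        = GPAM.clos L α {Ξ | ∃ θ : GPAM.Dist, ∃ c : ℝ,
            GPAM.IsZeroMeanL2 θ ∧ Ξ = GPAM.lift L θ c}) ∧
      (∃ C : ℝ, 0 < C ∧ ∀ θ : GPAM.Dist, GPAM.IsZeroMeanL2 θ →
        L.memBesov (2 * α - 2) (L.reson θ (GPAM.Kop θ)) ∧
          L.besov (2 * α - 2) (L.reson θ (GPAM.Kop θ)) ≤ C * GPAM.l2norm θ ^ 2) ∧
      (∀ (θ : GPAM.Dist) (θe : ℕ → GPAM.Dist), GPAM.IsZeroMeanL2 θ →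
        (∀ n, GPAM.IsZeroMeanL2 (θe n)) →
        Tendsto (fun n => GPAM.l2norm (θe n - θ)) atTop (nhds 0) →
        Tendsto (fun n => GPAM.hDist L α (GPAM.lift L (θe n) 0) (GPAM.lift L θ 0))
          atTop (nhds 0)) := by
  classical
  open GPAM in
  obtain ⟨hC⟩ := exists_ctx L
  have hCK0 : (0:ℝ) < hC.CK := lt_of_lt_of_le one_pos hC.hCK
  have hRm6 : (0:ℝ) ≤ 4*hC.Rm+6 := by nlinarith [hC.hRm]
  have h4c : (0:ℝ) < (4:ℝ)^(hC.c0:ℤ) := zpow_pos (by norm_num) _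
  set C1 : ℝ := (2:ℝ)^(1-α) * ((4*hC.Rm+6) * hC.CB) with hC1def
  set C2 : ℝ := (2:ℝ)^(2-2*α) * ((4*hC.Rm+6)^2 * (16 * (4:ℝ)^(hC.c0:ℤ) * hC.CB^3 * hC.CK))
    with hC2def
  have hC10 : 0 ≤ C1 :=
    mul_nonneg (Real.rpow_pos_of_pos two_pos _).le (mul_nonneg hRm6 hC.hCB)
  have hC20 : 0 ≤ C2 :=
    mul_nonneg (Real.rpow_pos_of_pos two_pos _).le (mul_nonneg (sq_nonneg _)
      (mul_nonneg (mul_nonneg (mul_nonneg (by norm_num) h4c.le) (pow_nonneg hC.hCB 3)) hCK0.le))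
  -- the quantitative second-component bound for differences of resonant products
  have resdiff_term : ∀ (θ θ' : Dist),
      (Summable fun k => ‖θ k‖^2) → (Summable fun k => ‖θ' k‖^2) → ∀ j : ℕ,
      (2:ℝ)^((2*α-2)*((j:ℝ)-1)) * supNorm (L.block ((j:ℤ)-1)
          (L.reson θ (Kop θ) - L.reson θ' (Kop θ')))
        ≤ C2 * (l2norm (θ - θ') * l2norm θ + l2norm θ' * l2norm (θ - θ')) := by
    intro θ θ' hθ hθ' j
    have hd : Summable fun k => ‖(θ - θ') k‖^2 := l2_sub_summable hθ hθ'
    have hsplit : L.reson θ (Kop θ) - L.reson θ' (Kop θ')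
        = L.reson (θ - θ') (Kop θ) + L.reson θ' (Kop (θ - θ')) := by
      funext k
      rw [Pi.sub_apply, Pi.add_apply]
      exact hC.reson_sub hθ hθ' hθ hθ' k
    rw [hsplit]
    have hm : (-1:ℤ) ≤ (j:ℤ)-1 := by omega
    have hpre0 : (0:ℝ) ≤ (2:ℝ)^((2*α-2)*((j:ℝ)-1)) := (Real.rpow_pos_of_pos two_pos _).le
    have hadd := hC.supNorm_block_add hm (L.reson (θ - θ') (Kop θ)) (L.reson θ' (Kop (θ - θ')))
    have h1 := besov_term_reson hC hα hd hθ j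
    have h2 := besov_term_reson hC hα hθ' hd j
    calc (2:ℝ)^((2*α-2)*((j:ℝ)-1)) * supNorm (L.block ((j:ℤ)-1)
            (L.reson (θ - θ') (Kop θ) + L.reson θ' (Kop (θ - θ'))))
        ≤ (2:ℝ)^((2*α-2)*((j:ℝ)-1)) * (supNorm (L.block ((j:ℤ)-1) (L.reson (θ - θ') (Kop θ)))
            + supNorm (L.block ((j:ℤ)-1) (L.reson θ' (Kop (θ - θ'))))) :=
          mul_le_mul_of_nonneg_left hadd hpre0
      _ = (2:ℝ)^((2*α-2)*((j:ℝ)-1)) * supNorm (L.block ((j:ℤ)-1) (L.reson (θ - θ') (Kop θ)))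
            + (2:ℝ)^((2*α-2)*((j:ℝ)-1)) * supNorm (L.block ((j:ℤ)-1) (L.reson θ' (Kop (θ - θ')))) := by
          ring
      _ ≤ C2 * (l2norm (θ - θ') * l2norm θ) + C2 * (l2norm θ' * l2norm (θ - θ')) :=
          add_le_add h1 h2
      _ = C2 * (l2norm (θ - θ') * l2norm θ + l2norm θ' * l2norm (θ - θ')) := by ring
  refine ⟨?_, ⟨C2 + 1, by linarith, fun θ hθ => ?_⟩, ?_⟩
  · -- set equality
    apply Set.Subset.antisymm
    · intro Ξ hΞ δ hδ
      obtain ⟨Ξ', hΞ'S, hdist⟩ := hΞ δ hδ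
      obtain ⟨θ, c, hsm, rfl⟩ := hΞ'S
      exact ⟨lift L θ c, ⟨θ, c, hsm.isZeroMeanL2, rfl⟩, hdist⟩
    · intro Ξ hΞ δ hδ
      obtain ⟨Ξ', hΞ'S, hdist⟩ := hΞ (δ/2) (by linarith)
      obtain ⟨θ, c, hθL2, rfl⟩ := hΞ'S
      obtain ⟨hθ0, hθsum, hθstar⟩ := hθL2
      set E : ℝ := C1 + C2 * (2 * l2norm θ) + 1 with hEdef
      have hE1 : (1:ℝ) ≤ E := by
        have := mul_nonneg hC20 (mul_nonneg (by norm_num : (0:ℝ) ≤ 2) (l2norm_nonneg θ))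
        rw [hEdef]; nlinarith
      have hE0 : (0:ℝ) < E := by linarith
      have hεpos : (0:ℝ) < (δ/(4*E))^2 := by positivity
      obtain ⟨S, hS⟩ := exists_tail_small hθsum hεpos
      set F := symmF S with hFdef
      set θ' := truncF θ F with hθ'def
      have hsm : IsSmoothZeroMean θ' := truncF_smooth hθstar S
      have hθ'sum : Summable fun k => ‖θ' k‖^2 := hsm.isZeroMeanL2.2.1
      have hθ'le : l2norm θ' ≤ l2norm θ := l2norm_mono hθsum (truncF_le θ F)
      have hdsum : Summable fun k => ‖(θ - θ') k‖^2 := l2_sub_summable hθsum hθ'sum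
      set e := l2norm (θ - θ') with hedef
      have he0 : 0 ≤ e := l2norm_nonneg _
      have hetail : e < δ/(4*E) := by
        have htsum : ∑' k, ‖(θ - θ') k‖^2 < (δ/(4*E))^2 := by
          apply hS _ (fun k => sq_nonneg _) (fun k => truncF_sub_le θ F k)
          intro k hk
          exact truncF_sub_vanish hθ0 F k (subset_symmF S hk)
        have := Real.sqrt_lt_sqrt (tsum_nonneg fun _ => sq_nonneg _) htsum
        rwa [Real.sqrt_sq (by positivity : (0:ℝ) ≤ δ/(4*E))] at this
      -- first component triangle
      have htri1 : L.besov (α-2) (Ξ.1 - θ') ≤ L.besov (α-2) (Ξ.1 - θ) + C1 * e := by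
        apply hC.besov_sub_tri Ξ.1 θ θ'
        intro j
        exact besov_term_lin hC hα hdsum j
      -- second component triangle
      have hsnd : (lift L θ c).2 - (lift L θ' c).2
          = L.reson θ (Kop θ) - L.reson θ' (Kop θ') := by
        show (L.reson θ (Kop θ) - constD c) - (L.reson θ' (Kop θ') - constD c) = _
        rw [sub_sub_sub_cancel_right]
      have htri2 : L.besov (2*α-2) (Ξ.2 - (lift L θ' c).2)
          ≤ L.besov (2*α-2) (Ξ.2 - (lift L θ c).2) + C2 * (e * l2norm θ + l2norm θ * e) := by
        apply hC.besov_sub_tri Ξ.2 (lift L θ c).2 ((lift L θ' c).2)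
        intro j
        have h := resdiff_term θ θ' hθsum hθ'sum j
        rw [← hsnd] at h
        refine h.trans ?_
        apply mul_le_mul_of_nonneg_left _ hC20
        have : l2norm θ' * e ≤ l2norm θ * e := mul_le_mul_of_nonneg_right hθ'le he0
        rw [← hedef]
        linarith
      refine ⟨lift L θ' c, ⟨θ', c, hsm, rfl⟩, ?_⟩
      have hE' : C1 * e + C2 * (e * l2norm θ + l2norm θ * e) ≤ E * e := by
        rw [hEdef]; ring_nf; nlinarith [he0, mul_nonneg hC20 (mul_nonneg (l2norm_nonneg θ) he0)]
      have hEe : E * e < δ/4 := by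
        calc E * e < E * (δ/(4*E)) := by
              exact (mul_lt_mul_iff_right₀ hE0).mpr hetail
          _ = δ/4 := by field_simp
      have hsum1 : hDist L α Ξ (lift L θ' c)
          = L.besov (α-2) (Ξ.1 - θ') + L.besov (2*α-2) (Ξ.2 - (lift L θ' c).2) := rfl
      have hsum2 : hDist L α Ξ (lift L θ c)
          = L.besov (α-2) (Ξ.1 - θ) + L.besov (2*α-2) (Ξ.2 - (lift L θ c).2) := rfl
      rw [hsum1]
      rw [hsum2] at hdist
      linarith
  · -- quantitative bound for θ ∈ ℋ
    obtain ⟨hθ0, hθsum, hθstar⟩ := hθ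
    have hterm : ∀ j : ℕ, (2:ℝ)^((2*α-2)*((j:ℝ)-1))
        * supNorm (L.block ((j:ℤ)-1) (L.reson θ (Kop θ)))
        ≤ (C2 + 1) * l2norm θ^2 := by
      intro j
      have h := besov_term_reson hC hα hθsum hθsum j
      refine h.trans ?_
      have hl2 : l2norm θ * l2norm θ = l2norm θ^2 := (sq (l2norm θ)).symm
      rw [hl2]
      nlinarith [sq_nonneg (l2norm θ)]
    exact ⟨memBesov_of hterm, besov_le hterm⟩
  · -- continuity of the lift along L² convergence
    intro θ θe hθ hθe htend
    obtain ⟨hθ0, hθsum, hθstar⟩ := hθ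
    set d := fun n => l2norm (θe n - θ) with hddef
    have hd0 : ∀ n, 0 ≤ d n := fun n => l2norm_nonneg _
    have hboundn : ∀ n, hDist L α (lift L (θe n) 0) (lift L θ 0)
        ≤ C1 * d n + C2 * (d n * Real.sqrt (2*l2norm θ^2 + 2*(d n)^2) + l2norm θ * d n) := by
      intro n
      have hsn : Summable fun k => ‖θe n k‖^2 := (hθe n).2.1
      have hdn : Summable fun k => ‖(θe n - θ) k‖^2 := l2_sub_summable hsn hθsum
      have hb1 : L.besov (α-2) (θe n - θ) ≤ C1 * d n :=
        besov_le fun j => besov_term_lin hC hα hdn j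
      have hsnd : (lift L (θe n) 0).2 - (lift L θ 0).2
          = L.reson (θe n) (Kop (θe n)) - L.reson θ (Kop θ) := by
        show (L.reson (θe n) (Kop (θe n)) - constD 0) - (L.reson θ (Kop θ) - constD 0) = _
        rw [sub_sub_sub_cancel_right]
      have hb2 : L.besov (2*α-2) ((lift L (θe n) 0).2 - (lift L θ 0).2)
          ≤ C2 * (d n * l2norm (θe n) + l2norm θ * d n) := by
        rw [hsnd]
        apply besov_le
        intro j
        have h := resdiff_term (θe n) θ hsn hθsum j
        refine h.trans (le_of_eq ?_)
        rw [hddef]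
      have hl2n : l2norm (θe n) ≤ Real.sqrt (2*l2norm θ^2 + 2*(d n)^2) :=
        l2norm_bound_of_sub hsn hθsum
      have hb2' : C2 * (d n * l2norm (θe n) + l2norm θ * d n)
          ≤ C2 * (d n * Real.sqrt (2*l2norm θ^2 + 2*(d n)^2) + l2norm θ * d n) := by
        apply mul_le_mul_of_nonneg_left _ hC20
        have := mul_le_mul_of_nonneg_left hl2n (hd0 n)
        linarith
      have hsum : hDist L α (lift L (θe n) 0) (lift L θ 0)
          = L.besov (α-2) (θe n - θ) + L.besov (2*α-2) ((lift L (θe n) 0).2 - (lift L θ 0).2) := rfl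
      rw [hsum]
      linarith
    have hnneg : ∀ n, 0 ≤ hDist L α (lift L (θe n) 0) (lift L θ 0) := by
      intro n
      exact add_nonneg (besov_nonneg L _ _) (besov_nonneg L _ _)
    have hin : Tendsto (fun n => 2*l2norm θ^2 + 2*(d n)^2) atTop
        (nhds (2*l2norm θ^2 + 2*(0:ℝ)^2)) :=
      tendsto_const_nhds.add ((htend.pow 2).const_mul 2)
    have hsqrt : Tendsto (fun n => Real.sqrt (2*l2norm θ^2 + 2*(d n)^2)) atTop
        (nhds (Real.sqrt (2*l2norm θ^2 + 2*(0:ℝ)^2))) :=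
      (Real.continuous_sqrt.tendsto _).comp hin
    have hterm2 : Tendsto (fun n => d n * Real.sqrt (2*l2norm θ^2 + 2*(d n)^2)) atTop
        (nhds (0 * Real.sqrt (2*l2norm θ^2 + 2*(0:ℝ)^2))) := htend.mul hsqrt
    have hterm3 : Tendsto (fun n => l2norm θ * d n) atTop (nhds (l2norm θ * 0)) :=
      htend.const_mul _
    have hφ : Tendsto (fun n => C1 * d n + C2 * (d n * Real.sqrt (2*l2norm θ^2 + 2*(d n)^2)
        + l2norm θ * d n)) atTop (nhds (C1 * 0 + C2 * (0 * Real.sqrt (2*l2norm θ^2 + 2*(0:ℝ)^2)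
        + l2norm θ * 0))) :=
      (htend.const_mul C1).add ((hterm2.add hterm3).const_mul C2)
    have hzero : C1 * 0 + C2 * (0 * Real.sqrt (2*l2norm θ^2 + 2*(0:ℝ)^2) + l2norm θ * 0) = 0 := by
      ring
    rw [hzero] at hφ
    exact squeeze_zero hnneg hboundn hφ
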